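/- arXiv:2511.22027 — 5 statements merged into one kernel-verified Lean document; each statement's English description precedes it below -/
import Mathlib

section
/- On any consistent preference domain in the variable-population housing market model, a mechanism is locally unanimous and consistent if and only if it equals the TTC mechanism in every market. -/
/- Variable-population housing market model (Shapley–Scarf). Agents and
objects are identified: `I` is the grand finite set of agents and object `i`
(the endowment of agent `i`) is identified with `i`. A market is a nonempty
`I' : Finset I`, whose object set `O_{I'}` is `I'` itself. A strict preference
on the objects `O_{I'}` is encoded as a strict linear order `r : I → I → Prop`
supported on `I'` (`r a b` meaning "`a` is strictly preferred to `b`"); an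
economy in market `I'` is a profile `R : I → I → I → Prop` with `R i` the
preference of agent `i` (only the components of agents `i ∈ I'` matter). A
mechanism assigns to every economy an assignment `I → I` (an allocation being
a bijection of `I'` onto itself). -/

open Finset

variable {I : Type*} [DecidableEq I]

/-- `r` is a strict preference (linear order) on the objects `O_{I'} = I'`. -/
def IsPrefOn (I' : Finset I) (r : I → I → Prop) : Prop :=
  (∀ a b, r a b → a ∈ I' ∧ b ∈ I') ∧
  (∀ a ∈ I', ∀ b ∈ I', a ≠ b → (r a b ∨ r b a)) ∧
  (∀ a, ¬ r a a) ∧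
  (∀ a b c, r a b → r b c → r a c)

/-- The restriction `≻|_J` of a preference to the objects `O_J = J`. -/
def restr (J : Finset I) (r : I → I → Prop) : I → I → Prop :=
  fun a b => r a b ∧ a ∈ J ∧ b ∈ J

/-- A (variable-population) preference domain: a set of preferences for every market. -/
abbrev Domain (I : Type*) := Finset I → Set (I → I → Prop)

/-- The domain is consistent: restrictions of admissible preferences are admissible. -/
def ConsistentDomain (D : Domain I) : Prop :=
  ∀ I' : Finset I, ∀ r ∈ D I', ∀ J : Finset I, J ⊆ I' → J.Nonempty → restr J r ∈ D J

/-- The maximal element of `S` under the strict relation `r`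
(`d` is a junk default, used only if no maximal element exists). -/
noncomputable def bestIn (r : I → I → Prop) (S : Finset I) (d : I) : I :=
  letI := Classical.dec (∃ m ∈ S, ∀ x ∈ S, x ≠ m → r m x)
  if h : ∃ m ∈ S, ∀ x ∈ S, x ≠ m → r m x then h.choose else d

/-- The agents of `S` lying on a cycle of the pointing map `fun i => fav i S`. -/
def cyclicAgents (fav : I → Finset I → I) (S : Finset I) : Finset I :=
  S.filter fun i => ∃ k ∈ Finset.range S.card, (fun j => fav j S)^[k + 1] i = i

lemma cyclicAgents_subset (fav : I → Finset I → I) (S : Finset I) :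
    cyclicAgents fav S ⊆ S := Finset.filter_subset _ _

/-- The TTC procedure on the set `S` of remaining agents: every agent of `S`
lying on a pointing cycle receives the object owned by the agent he points to
and is removed; the procedure is then repeated on the remaining agents.
(Agents outside `S` keep their endowments; for pointing maps induced by
preferences a cycle always exists, so the `else` branch is never reached.) -/
def TTCaux (fav : I → Finset I → I) (S : Finset I) : I → I :=
  if hC : (cyclicAgents fav S).Nonempty then fun i =>
    if i ∈ cyclicAgents fav S then fav i S else TTCaux fav (S \ cyclicAgents fav S) i
  else id
termination_by S.card
decreasing_by
  exact Finset.card_lt_card (Finset.sdiff_ssubset (cyclicAgents_subset fav S) hC)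

/-- The Top Trading Cycles mechanism in market `I'` (each agent points at the
owner of his most preferred remaining object). -/
noncomputable def TTCv (I' : Finset I) (R : I → I → I → Prop) : I → I :=
  TTCaux (fun i S => bestIn (R i) S i) I'

/-- Local unanimity for variable populations: in every economy, whenever a
nonempty set `J` of agents admits a unanimously best suballocation `μ`
(a bijection of `J` onto `O_J = J` giving every member of `J` his most
preferred object of `O_{I'}`), the mechanism implements `μ` on `J`. -/
def LocallyUnanimousV (D : Domain I) (ψ : Finset I → (I → I → I → Prop) → I → I) : Prop :=
  ∀ I' : Finset I, I'.Nonempty → ∀ R : I → I → I → Prop, (∀ i ∈ I', R i ∈ D I') →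
    ∀ J : Finset I, J ⊆ I' → J.Nonempty → ∀ μ : I → I, Set.BijOn μ ↑J ↑J →
      (∀ i ∈ J, ∀ o ∈ I', o ≠ μ i → R i (μ i) o) →
      ∀ i ∈ J, ψ I' R i = μ i

/-- Consistency of a mechanism: if the agents of `I' ∖ J` are assigned exactly
their own endowments `O_{I' ∖ J}` and are removed, every remaining agent
receives the same object in the reduced economy on `J`. -/
def ConsistentMechV (D : Domain I) (ψ : Finset I → (I → I → I → Prop) → I → I) : Prop :=
  ∀ I' : Finset I, I'.Nonempty → ∀ R : I → I → I → Prop, (∀ i ∈ I', R i ∈ D I') →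
    ∀ J : Finset I, J ⊆ I' → J.Nonempty →
      (I' \ J).image (fun i => ψ I' R i) = I' \ J →
      ∀ i ∈ J, ψ J (fun j => restr J (R j)) i = ψ I' R i


section Aux

variable {I' S S' J B T : Finset I} {r : I → I → Prop} {R : I → I → I → Prop} {i d : I}

lemma exists_max (hpref : IsPrefOn I' r) :
    ∀ S : Finset I, S ⊆ I' → S.Nonempty → ∃ m ∈ S, ∀ x ∈ S, x ≠ m → r m x := by
  obtain ⟨-, htot, -, htr⟩ := hpref
  intro S
  induction S using Finset.induction_on with
  | empty => intro _ h; exact absurd h (by simp)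
  | @insert a s ha ih =>
    intro hsub _
    rcases s.eq_empty_or_nonempty with rfl | hne
    · exact ⟨a, by simp, by simp⟩
    · obtain ⟨m, hm, hmax⟩ := ih (fun x hx => hsub (Finset.mem_insert_of_mem hx)) hne
      have haI : a ∈ I' := hsub (Finset.mem_insert_self a s)
      have hmI : m ∈ I' := hsub (Finset.mem_insert_of_mem hm)
      have ham : a ≠ m := fun h => ha (h ▸ hm)
      rcases htot a haI m hmI ham with h | h
      · refine ⟨a, Finset.mem_insert_self a s, ?_⟩
        intro x hx hxa
        rcases Finset.mem_insert.1 hx with rfl | hxs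
        · exact absurd rfl hxa
        · rcases eq_or_ne x m with rfl | hxm
          · exact h
          · exact htr _ _ _ h (hmax x hxs hxm)
      · refine ⟨m, Finset.mem_insert_of_mem hm, ?_⟩
        intro x hx hxm
        rcases Finset.mem_insert.1 hx with rfl | hxs
        · exact h
        · exact hmax x hxs hxm

lemma bestIn_eq (hirr : ∀ a, ¬ r a a) (htr : ∀ a b c, r a b → r b c → r a c)
    {m : I} (hm : m ∈ S) (hmax : ∀ x ∈ S, x ≠ m → r m x) : bestIn r S d = m := by
  classical
  have hex : ∃ m ∈ S, ∀ x ∈ S, x ≠ m → r m x := ⟨m, hm, hmax⟩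
  rw [bestIn]
  rw [dif_pos hex]
  obtain ⟨hm', hmax'⟩ := hex.choose_spec
  by_contra hne
  exact hirr _ (htr _ _ _ (hmax' m hm (Ne.symm (by simpa using hne))) (hmax _ hm' hne))

lemma bestIn_spec (hpref : IsPrefOn I' r) (hS : S ⊆ I') (hne : S.Nonempty) :
    bestIn r S d ∈ S ∧ ∀ x ∈ S, x ≠ bestIn r S d → r (bestIn r S d) x := by
  obtain ⟨m, hm, hmax⟩ := exists_max hpref S hS hne
  rw [bestIn_eq hpref.2.2.1 hpref.2.2.2 hm hmax]
  exact ⟨hm, hmax⟩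

lemma isPrefOn_restr (hpref : IsPrefOn I' r) (hJ : J ⊆ I') : IsPrefOn J (restr J r) := by
  obtain ⟨hsupp, htot, hirr, htr⟩ := hpref
  refine ⟨fun a b h => ⟨h.2.1, h.2.2⟩, fun a ha b hb hab => ?_,
    fun a h => hirr a h.1, fun a b c h1 h2 => ⟨htr _ _ _ h1.1 h2.1, h1.2.1, h2.2.2⟩⟩
  rcases htot a (hJ ha) b (hJ hb) hab with h | h
  · exact Or.inl ⟨h, ha, hb⟩
  · exact Or.inr ⟨h, hb, ha⟩

lemma bestIn_restr (hpref : IsPrefOn I' r) (hJ : J ⊆ I') (hS : S ⊆ J) (hne : S.Nonempty) :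
    bestIn (restr J r) S d = bestIn r S d := by
  obtain ⟨hm, hmax⟩ := bestIn_spec (r := r) (d := d) hpref (hS.trans hJ) hne
  have hp' := isPrefOn_restr hpref hJ
  exact bestIn_eq hp'.2.2.1 hp'.2.2.2 hm
    (fun x hx hxm => ⟨hmax x hx hxm, hS hm, hS hx⟩)


/-- pointing map induced by a preference profile -/
noncomputable def favOf (R : I → I → I → Prop) : I → Finset I → I :=
  fun j S => bestIn (R j) S j

lemma fav_mem (hR : ∀ j ∈ I', IsPrefOn I' (R j)) (hS : S ⊆ I') (hi : i ∈ S) :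
    favOf R i S ∈ S :=
  (bestIn_spec (hR i (hS hi)) hS ⟨i, hi⟩).1

lemma fav_top (hR : ∀ j ∈ I', IsPrefOn I' (R j)) (hS : S ⊆ I') (hi : i ∈ S) :
    ∀ x ∈ S, x ≠ favOf R i S → R i (favOf R i S) x :=
  (bestIn_spec (hR i (hS hi)) hS ⟨i, hi⟩).2

/-- the max over a subset containing the max over the superset coincide -/
lemma fav_subset_eq (hR : ∀ j ∈ I', IsPrefOn I' (R j)) (hS : S ⊆ I') (hS' : S' ⊆ S)
    (hi : i ∈ S) (hmem : favOf R i S ∈ S') : favOf R i S' = favOf R i S := by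
  have hp := hR i (hS hi)
  exact bestIn_eq hp.2.2.1 hp.2.2.2 hmem
    (fun x hx hxm => fav_top hR hS hi x (hS' hx) hxm)

section Iter

variable {g g' : I → I} {A : Finset I} {a b : I}

lemma iter_mem (hcl : ∀ x ∈ A, g x ∈ A) (ha : a ∈ A) : ∀ t, g^[t] a ∈ A := by
  intro t
  induction t with
  | zero => simpa using ha
  | succ n ih => rw [Function.iterate_succ_apply']; exact hcl _ ih

lemma iter_congr (hcl : ∀ x ∈ A, g x ∈ A) (hag : ∀ x ∈ A, g x = g' x) (ha : a ∈ A) :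
    ∀ t, g^[t] a = g'^[t] a := by
  intro t
  induction t with
  | zero => rfl
  | succ n ih =>
    rw [Function.iterate_succ_apply', Function.iterate_succ_apply', ← ih,
      hag _ (iter_mem hcl ha n)]

lemma iter_injOn (hcl : ∀ x ∈ A, g x ∈ A) (hinj : Set.InjOn g ↑A) :
    ∀ t, ∀ a ∈ A, ∀ b ∈ A, g^[t] a = g^[t] b → a = b := by
  intro t
  induction t with
  | zero => intro a _ b _ h; simpa using h
  | succ n ih =>
    intro a ha b hb h
    rw [Function.iterate_succ_apply', Function.iterate_succ_apply'] at h
    exact ih a ha b hb (hinj (by exact_mod_cast iter_mem hcl ha n)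
      (by exact_mod_cast iter_mem hcl hb n) h)

lemma period_mul {p : ℕ} (h : g^[p] a = a) (k : ℕ) : g^[p * k] a = a := by
  rw [Function.iterate_mul]
  exact Function.iterate_fixed h k

lemma exists_small_period {S : Finset I} (horb : ∀ t, g^[t] a ∈ S) {m : ℕ}
    (hm : 0 < m) (hma : g^[m] a = a) :
    ∃ k ∈ Finset.range S.card, g^[k + 1] a = a := by
  classical
  have hex : ∃ p, 0 < p ∧ g^[p] a = a := ⟨m, hm, hma⟩
  set p := Nat.find hex with hp
  obtain ⟨hppos, hpa⟩ : 0 < p ∧ g^[p] a = a := Nat.find_spec hex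
  have key : ∀ u v : ℕ, u < v → v < p → g^[u] a = g^[v] a → False := by
    intro u v hlt hv huv
    have hd : g^[v - u] a = a := by
      have h1 : g^[p - u + v] a = a := by
        have e1 : g^[p - u + v] a = g^[p - u] (g^[v] a) := Function.iterate_add_apply g _ _ a
        rw [e1, ← huv]
        have e2 : g^[p - u] (g^[u] a) = g^[p - u + u] a := (Function.iterate_add_apply g _ _ a).symm
        rw [e2, Nat.sub_add_cancel (by omega : u ≤ p), hpa]
      have h2 : p - u + v = (v - u) + p := by omega
      rw [h2, Function.iterate_add_apply, hpa] at h1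
      exact h1
    exact Nat.lt_irrefl _ (Nat.lt_of_lt_of_le (show v - u < p by omega)
      (Nat.find_le ⟨by omega, hd⟩))
  have hinj : Set.InjOn (fun t => g^[t] a) ↑(Finset.range p) := by
    intro u hu v hv huv
    simp only [Finset.coe_range, Set.mem_Iio] at hu hv
    simp only at huv
    rcases Nat.lt_trichotomy u v with h | h | h
    · exact absurd huv (fun hh => key u v h hv hh)
    · exact h
    · exact absurd huv.symm (fun hh => key v u h hu hh)
  have hcard : p ≤ S.card := by
    have := Finset.card_le_card_of_injOn (fun t => g^[t] a) (fun t _ => horb t) hinj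
    simpa using this
  exact ⟨p - 1, Finset.mem_range.2 (by omega), by rw [Nat.sub_add_cancel hppos]; exact hpa⟩

end Iter


lemma mem_cyclicAgents {fav : I → Finset I → I} :
    i ∈ cyclicAgents fav S ↔ i ∈ S ∧ ∃ k, k < S.card ∧ (fun j => fav j S)^[k + 1] i = i := by
  simp [cyclicAgents]

lemma cyc_closed {fav : I → Finset I → I}
    (hfS : ∀ x ∈ S, fav x S ∈ S) (hi : i ∈ cyclicAgents fav S) :
    fav i S ∈ cyclicAgents fav S := by
  obtain ⟨hiS, k, hk, hper⟩ := mem_cyclicAgents.1 hi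
  refine mem_cyclicAgents.2 ⟨hfS i hiS, k, hk, ?_⟩
  set g : I → I := fun j => fav j S with hg
  show g^[k+1] (g i) = g i
  rw [← Function.iterate_succ_apply, Function.iterate_succ_apply', hper]

lemma cyc_nonempty (hR : ∀ j ∈ I', IsPrefOn I' (R j)) (hS : S ⊆ I') (hne : S.Nonempty) :
    (cyclicAgents (favOf R) S).Nonempty := by
  classical
  obtain ⟨a, ha⟩ := hne
  set g : I → I := fun j => favOf R j S with hg
  have hcl : ∀ x ∈ S, g x ∈ S := fun x hx => fav_mem hR hS hx
  have horb : ∀ t, g^[t] a ∈ S := iter_mem hcl ha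
  obtain ⟨t1, ht1, t2, ht2, hne12, heq⟩ :=
    Finset.exists_ne_map_eq_of_card_lt_of_maps_to
      (s := Finset.range (S.card + 1)) (t := S) (by simp) (fun t _ => horb t)
  rcases Nat.lt_or_ge t1 t2 with hlt | hge
  · have hper : g^[t2 - t1] (g^[t1] a) = g^[t1] a := by
      rw [← Function.iterate_add_apply, Nat.sub_add_cancel (le_of_lt hlt), heq]
    obtain ⟨k, hk, hka⟩ := exists_small_period
      (fun t => by rw [← Function.iterate_add_apply]; exact horb _)
      (show 0 < t2 - t1 by omega) hper
    exact ⟨g^[t1] a, mem_cyclicAgents.2 ⟨horb t1, k, Finset.mem_range.1 hk, hka⟩⟩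
  · have hlt : t2 < t1 := by omega
    have hper : g^[t1 - t2] (g^[t2] a) = g^[t2] a := by
      rw [← Function.iterate_add_apply, Nat.sub_add_cancel (le_of_lt hlt), heq]
    obtain ⟨k, hk, hka⟩ := exists_small_period
      (fun t => by rw [← Function.iterate_add_apply]; exact horb _)
      (show 0 < t1 - t2 by omega) hper
    exact ⟨g^[t2] a, mem_cyclicAgents.2 ⟨horb t2, k, Finset.mem_range.1 hk, hka⟩⟩

lemma cyc_inj {fav : I → Finset I → I} {a b : I}
    (ha : a ∈ cyclicAgents fav S) (hb : b ∈ cyclicAgents fav S)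
    (hab : fav a S = fav b S) : a = b := by
  obtain ⟨-, ka, -, hpa⟩ := mem_cyclicAgents.1 ha
  obtain ⟨-, kb, -, hpb⟩ := mem_cyclicAgents.1 hb
  set g : I → I := fun j => fav j S with hg
  have hqa : g^[(ka + 1) * (kb + 1)] a = a := period_mul hpa _
  have hqb : g^[(ka + 1) * (kb + 1)] b = b := by
    rw [Nat.mul_comm]; exact period_mul hpb _
  have hq1 : 1 ≤ (ka + 1) * (kb + 1) := Nat.one_le_iff_ne_zero.2 (by positivity)
  calc a = g^[(ka + 1) * (kb + 1)] a := hqa.symm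
    _ = g^[(ka + 1) * (kb + 1) - 1] (g a) := by
        rw [← Function.iterate_succ_apply, Nat.succ_eq_add_one, Nat.sub_add_cancel hq1]
    _ = g^[(ka + 1) * (kb + 1) - 1] (g b) := by rw [show g a = g b from hab]
    _ = g^[(ka + 1) * (kb + 1)] b := by
        rw [← Function.iterate_succ_apply, Nat.succ_eq_add_one, Nat.sub_add_cancel hq1]
    _ = b := hqb

lemma image_eq_self_of_inj_closed {f : I → I} {A : Finset I}
    (hcl : ∀ a ∈ A, f a ∈ A) (hinj : ∀ a ∈ A, ∀ b ∈ A, f a = f b → a = b) :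
    A.image f = A := by
  apply Finset.eq_of_subset_of_card_le
  · intro x hx
    obtain ⟨a, ha, rfl⟩ := Finset.mem_image.1 hx
    exact hcl a ha
  · rw [Finset.card_image_of_injOn (fun a ha b hb => hinj a ha b hb)]

lemma cyc_image {fav : I → Finset I → I} (hfS : ∀ x ∈ S, fav x S ∈ S) :
    (cyclicAgents fav S).image (fun j => fav j S) = cyclicAgents fav S :=
  image_eq_self_of_inj_closed (fun a ha => cyc_closed hfS ha)
    (fun a ha b hb h => cyc_inj ha hb h)

/-- transporting cycles to a submarket -/
lemma cyc_transport {S₂ A : Finset I} (hR : ∀ j ∈ I', IsPrefOn I' (R j)) (hS : S ⊆ I')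
    (hS₂ : S₂ ⊆ S) (hA : A ⊆ cyclicAgents (favOf R) S)
    (hAcl : ∀ a ∈ A, favOf R a S ∈ A) (hAS₂ : A ⊆ S₂) :
    (∀ a ∈ A, favOf R a S₂ = favOf R a S) ∧ A ⊆ cyclicAgents (favOf R) S₂ := by
  have hfe : ∀ a ∈ A, favOf R a S₂ = favOf R a S := by
    intro a haA
    exact fav_subset_eq hR hS hS₂ (cyclicAgents_subset _ _ (hA haA)) (hAS₂ (hAcl a haA))
  refine ⟨hfe, fun a haA => ?_⟩
  obtain ⟨haS, k, hk, hper⟩ := mem_cyclicAgents.1 (hA haA)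
  set g : I → I := fun j => favOf R j S with hg
  set g' : I → I := fun j => favOf R j S₂ with hg'
  have hcl' : ∀ x ∈ A, g' x ∈ A := by
    intro x hx; show favOf R x S₂ ∈ A; rw [hfe x hx]; exact hAcl x hx
  have hagree : ∀ x ∈ A, g' x = g x := fun x hx => hfe x hx
  have hper' : g'^[k + 1] a = a := by
    rw [iter_congr hcl' hagree haA (k+1)]
    exact hper
  have horb : ∀ t, g'^[t] a ∈ S₂ := fun t => hAS₂ (iter_mem hcl' haA t)
  obtain ⟨k', hk', hka'⟩ := exists_small_period horb (Nat.succ_pos k) hper'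
  exact mem_cyclicAgents.2 ⟨hAS₂ haA, k', Finset.mem_range.1 hk', hka'⟩

section Unfold

variable {fav : I → Finset I → I}

lemma TTCaux_of_mem (hC : (cyclicAgents fav S).Nonempty) (hi : i ∈ cyclicAgents fav S) :
    TTCaux fav S i = fav i S := by
  rw [TTCaux, dif_pos hC, if_pos hi]

lemma TTCaux_of_notMem (hC : (cyclicAgents fav S).Nonempty) (hi : i ∉ cyclicAgents fav S) :
    TTCaux fav S i = TTCaux fav (S \ cyclicAgents fav S) i := by
  rw [TTCaux, dif_pos hC, if_neg hi]

lemma TTCaux_of_empty (hC : ¬ (cyclicAgents fav S).Nonempty) : TTCaux fav S i = i := by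
  rw [TTCaux, dif_neg hC]; rfl

end Unfold


section Struct

variable (hR : ∀ j ∈ I', IsPrefOn I' (R j))
include hR

lemma TTCaux_id_of_notMem :
    ∀ S : Finset I, S ⊆ I' → ∀ i, i ∉ S → TTCaux (favOf R) S i = i := by
  intro S
  induction S using Finset.strongInduction with
  | _ S ih =>
    intro hS i hi
    by_cases hC : (cyclicAgents (favOf R) S).Nonempty
    · rw [TTCaux_of_notMem hC (fun h => hi (cyclicAgents_subset _ _ h))]
      exact ih _ (Finset.sdiff_ssubset (cyclicAgents_subset _ _) hC)
        ((Finset.sdiff_subset).trans hS) i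
        (fun h => hi (Finset.mem_sdiff.1 h).1)
    · exact TTCaux_of_empty hC

lemma TTCaux_image_inj :
    ∀ S : Finset I, S ⊆ I' →
      S.image (TTCaux (favOf R) S) = S ∧ Set.InjOn (TTCaux (favOf R) S) ↑S := by
  intro S
  induction S using Finset.strongInduction with
  | _ S ih =>
    intro hS
    by_cases hC : (cyclicAgents (favOf R) S).Nonempty
    · set C := cyclicAgents (favOf R) S with hCdef
      have hCS : C ⊆ S := cyclicAgents_subset _ _
      have hfS : ∀ x ∈ S, favOf R x S ∈ S := fun x hx => fav_mem hR hS hx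
      have hsub : S \ C ⊂ S := Finset.sdiff_ssubset hCS hC
      obtain ⟨ihimg, ihinj⟩ := ih _ hsub (Finset.sdiff_subset.trans hS)
      have hval1 : ∀ a ∈ C, TTCaux (favOf R) S a = favOf R a S :=
        fun a ha => TTCaux_of_mem hC ha
      have hval2 : ∀ a, a ∉ C → TTCaux (favOf R) S a = TTCaux (favOf R) (S \ C) a :=
        fun a ha => TTCaux_of_notMem hC ha
      have hmem1 : ∀ a ∈ C, TTCaux (favOf R) S a ∈ C := by
        intro a ha; rw [hval1 a ha]; exact cyc_closed hfS ha
      have hmem2 : ∀ a ∈ S \ C, TTCaux (favOf R) S a ∈ S \ C := by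
        intro a ha
        rw [hval2 a (Finset.mem_sdiff.1 ha).2]
        have h := Finset.mem_image_of_mem (TTCaux (favOf R) (S \ C)) ha
        rwa [ihimg] at h
      constructor
      · have hdecomp : C ∪ (S \ C) = S := Finset.union_sdiff_of_subset hCS
        have himg : S.image (TTCaux (favOf R) S)
            = C.image (TTCaux (favOf R) S) ∪ (S \ C).image (TTCaux (favOf R) S) := by
          rw [← Finset.image_union, hdecomp]
        have h1 : C.image (TTCaux (favOf R) S) = C := by
          rw [Finset.image_congr (g := fun a => favOf R a S)
            (fun a ha => hval1 a (Finset.mem_coe.1 ha))]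
          exact cyc_image hfS
        have h2 : (S \ C).image (TTCaux (favOf R) S) = S \ C := by
          rw [Finset.image_congr (g := TTCaux (favOf R) (S \ C))
            (fun a ha => hval2 a (Finset.mem_sdiff.1 (Finset.mem_coe.1 ha)).2)]
          exact ihimg
        rw [himg, h1, h2, hdecomp]
      · intro a ha b hb hab
        have ha' : a ∈ S := by exact_mod_cast ha
        have hb' : b ∈ S := by exact_mod_cast hb
        by_cases haC : a ∈ C <;> by_cases hbC : b ∈ C
        · refine cyc_inj haC hbC ?_
          rw [← hval1 a haC, ← hval1 b hbC, hab]
        · exact absurd (hab ▸ hmem1 a haC)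
            (fun h => (Finset.mem_sdiff.1 (hmem2 b (Finset.mem_sdiff.2 ⟨hb', hbC⟩))).2 (hab ▸ h))
        · exact absurd (hab ▸ hmem1 b hbC)
            (fun h => (Finset.mem_sdiff.1 (hmem2 a (Finset.mem_sdiff.2 ⟨ha', haC⟩))).2 h)
        · refine ihinj ?_ ?_ ?_
          · exact_mod_cast Finset.mem_sdiff.2 ⟨ha', haC⟩
          · exact_mod_cast Finset.mem_sdiff.2 ⟨hb', hbC⟩
          · rw [← hval2 a haC, ← hval2 b hbC, hab]
    · have hSe : S = ∅ := by
        by_contra h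
        exact hC (cyc_nonempty hR hS (Finset.nonempty_of_ne_empty h))
      subst hSe
      simp

lemma TTCaux_mem (hS : S ⊆ I') (hi : i ∈ S) : TTCaux (favOf R) S i ∈ S := by
  have h := Finset.mem_image_of_mem (TTCaux (favOf R) S) hi
  rwa [(TTCaux_image_inj hR S hS).1] at h

end Struct


section Core

variable (hR : ∀ j ∈ I', IsPrefOn I' (R j))
include hR

/-- order independence: first executing any union `B` of currently available
cycles does not change the assignment of the remaining agents -/
lemma TTC_OI :
    ∀ S : Finset I, S ⊆ I' → ∀ B : Finset I, B ⊆ cyclicAgents (favOf R) S →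
      (∀ a ∈ B, favOf R a S ∈ B) →
      ∀ i ∈ S \ B, TTCaux (favOf R) (S \ B) i = TTCaux (favOf R) S i := by
  intro S
  induction S using Finset.strongInduction with
  | _ S ih =>
    intro hS B hBC hBcl i hi
    rcases B.eq_empty_or_nonempty with rfl | hBne
    · rw [Finset.sdiff_empty]
    set C := cyclicAgents (favOf R) S with hCdef
    have hC : C.Nonempty := hBne.mono hBC
    have hCS : C ⊆ S := cyclicAgents_subset _ _
    have hBS : B ⊆ S := hBC.trans hCS
    have hSB : S \ B ⊆ S := Finset.sdiff_subset
    have hSBI : S \ B ⊆ I' := hSB.trans hS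
    have hfS : ∀ x ∈ S, favOf R x S ∈ S := fun x hx => fav_mem hR hS hx
    have himgB : B.image (fun a => favOf R a S) = B :=
      image_eq_self_of_inj_closed hBcl
        (fun a ha b hb h => cyc_inj (hBC ha) (hBC hb) h)
    have hCBcl : ∀ a ∈ C \ B, favOf R a S ∈ C \ B := by
      intro a ha
      obtain ⟨haC, haB⟩ := Finset.mem_sdiff.1 ha
      refine Finset.mem_sdiff.2 ⟨cyc_closed hfS haC, fun hfB => ?_⟩
      rw [← himgB] at hfB
      obtain ⟨b, hb, hba⟩ := Finset.mem_image.1 hfB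
      exact haB (cyc_inj (hBC hb) haC hba ▸ hb)
    obtain ⟨hfe, hsubcyc⟩ := cyc_transport hR hS hSB
      (Finset.sdiff_subset : C \ B ⊆ C) hCBcl
      (Finset.sdiff_subset_sdiff hCS (Finset.Subset.refl B))
    have hCBcl' : ∀ a ∈ C \ B, favOf R a (S \ B) ∈ C \ B := by
      intro a ha; rw [hfe a ha]; exact hCBcl a ha
    have IH := ih (S \ B) (Finset.sdiff_ssubset hBS hBne) hSBI (C \ B) hsubcyc hCBcl'
    have hset : (S \ B) \ (C \ B) = S \ C := by
      ext x
      simp only [Finset.mem_sdiff]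
      constructor
      · rintro ⟨⟨hxS, hxB⟩, h⟩
        exact ⟨hxS, fun hxC => h ⟨hxC, hxB⟩⟩
      · rintro ⟨hxS, hxC⟩
        exact ⟨⟨hxS, fun hxB => hxC (hBC hxB)⟩, fun h => hxC h.1⟩
    obtain ⟨hiS, hiB⟩ := Finset.mem_sdiff.1 hi
    have hCne' : (cyclicAgents (favOf R) (S \ B)).Nonempty := cyc_nonempty hR hSBI ⟨i, hi⟩
    by_cases hiC : i ∈ C
    · have hiCB : i ∈ C \ B := Finset.mem_sdiff.2 ⟨hiC, hiB⟩
      rw [TTCaux_of_mem hCne' (hsubcyc hiCB), hfe i hiCB, TTCaux_of_mem hC hiC]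
    · have hi' : i ∈ (S \ B) \ (C \ B) :=
        Finset.mem_sdiff.2 ⟨hi, fun h => hiC (Finset.mem_sdiff.1 h).1⟩
      rw [← IH i hi', hset, TTCaux_of_notMem hC hiC]


/-- consistency of the TTC procedure -/
lemma TTC_CONS :
    ∀ S : Finset I, S ⊆ I' → ∀ T : Finset I, T ⊆ S →
      T.image (TTCaux (favOf R) S) = T →
      ∀ i ∈ S \ T, TTCaux (favOf R) (S \ T) i = TTCaux (favOf R) S i := by
  intro S
  induction S using Finset.strongInduction with
  | _ S ih =>
    intro hS T hTS himgT i hi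
    rcases T.eq_empty_or_nonempty with rfl | hTne
    · rw [Finset.sdiff_empty]
    set C := cyclicAgents (favOf R) S with hCdef
    have hSne : S.Nonempty := hTne.mono hTS
    have hC : C.Nonempty := cyc_nonempty hR hS hSne
    have hCS : C ⊆ S := cyclicAgents_subset _ _
    have hfS : ∀ x ∈ S, favOf R x S ∈ S := fun x hx => fav_mem hR hS hx
    obtain ⟨himgS, hinj⟩ := TTCaux_image_inj hR S hS
    obtain ⟨hiS, hiT⟩ := Finset.mem_sdiff.1 hi
    set B := C ∩ T with hBdef
    have hBC : B ⊆ C := Finset.inter_subset_left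
    have hBT : B ⊆ T := Finset.inter_subset_right
    have hBcl : ∀ a ∈ B, favOf R a S ∈ B := by
      intro a ha
      obtain ⟨haC, haT⟩ := Finset.mem_inter.1 ha
      refine Finset.mem_inter.2 ⟨cyc_closed hfS haC, ?_⟩
      have h1 : TTCaux (favOf R) S a ∈ T := by
        rw [← himgT]; exact Finset.mem_image_of_mem _ haT
      rwa [TTCaux_of_mem hC haC] at h1
    rcases B.eq_empty_or_nonempty with hBe | hBne
    · -- no round-1 cycle meets T
      have hCT : ∀ a ∈ C, a ∉ T := by
        intro a haC haT
        have : a ∈ B := Finset.mem_inter.2 ⟨haC, haT⟩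
        rw [hBe] at this
        exact absurd this (Finset.notMem_empty a)
      have hTSC : T ⊆ S \ C := fun x hx =>
        Finset.mem_sdiff.2 ⟨hTS hx, fun hxC => hCT x hxC hx⟩
      have hCST : C ⊆ S \ T := fun x hx =>
        Finset.mem_sdiff.2 ⟨hCS hx, hCT x hx⟩
      have hCcl : ∀ a ∈ C, favOf R a S ∈ C := fun a ha => cyc_closed hfS ha
      obtain ⟨hfe, hsubcyc⟩ := cyc_transport hR hS (Finset.sdiff_subset : S \ T ⊆ S)
        (Finset.Subset.refl C) hCcl hCST
      have hCne' : (cyclicAgents (favOf R) (S \ T)).Nonempty :=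
        cyc_nonempty hR (Finset.sdiff_subset.trans hS) ⟨i, hi⟩
      by_cases hiC : i ∈ C
      · rw [TTCaux_of_mem hCne' (hsubcyc hiC), hfe i hiC, TTCaux_of_mem hC hiC]
      · have hCcl' : ∀ a ∈ C, favOf R a (S \ T) ∈ C := by
          intro a ha; rw [hfe a ha]; exact hCcl a ha
        have OI := TTC_OI hR (S \ T) (Finset.sdiff_subset.trans hS) C hsubcyc hCcl'
        have himgT' : T.image (TTCaux (favOf R) (S \ C)) = T := by
          rw [Finset.image_congr (g := TTCaux (favOf R) S)
            (fun j hj => (TTCaux_of_notMem hC (hCT j · (Finset.mem_coe.1 hj))).symm)]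
          exact himgT
        have IH := ih (S \ C) (Finset.sdiff_ssubset hCS hC)
          (Finset.sdiff_subset.trans hS) T hTSC himgT'
        have hcomm : (S \ T) \ C = (S \ C) \ T := sdiff_right_comm S T C
        have hi1 : i ∈ (S \ T) \ C := Finset.mem_sdiff.2 ⟨hi, hiC⟩
        have hi2 : i ∈ (S \ C) \ T := by rwa [← hcomm]
        rw [← OI i hi1, hcomm, IH i hi2, TTCaux_of_notMem hC hiC]
    · -- execute the T-cycles B first
      have OI := TTC_OI hR S hS B hBC hBcl
      have himgB : B.image (TTCaux (favOf R) S) = B := by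
        rw [Finset.image_congr (g := fun a => favOf R a S)
          (fun a ha => TTCaux_of_mem hC (hBC (Finset.mem_coe.1 ha)))]
        exact image_eq_self_of_inj_closed hBcl
          (fun a ha b hb h => cyc_inj (hBC ha) (hBC hb) h)
      have hTB_SB : T \ B ⊆ S \ B := Finset.sdiff_subset_sdiff hTS (Finset.Subset.refl B)
      have himgTB : (T \ B).image (TTCaux (favOf R) (S \ B)) = T \ B := by
        rw [Finset.image_congr (g := TTCaux (favOf R) S)
          (fun j hj => OI j (hTB_SB (Finset.mem_coe.1 hj)))]
        apply Finset.eq_of_subset_of_card_le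
        · intro x hx
          obtain ⟨a, ha, rfl⟩ := Finset.mem_image.1 hx
          obtain ⟨haT, haB⟩ := Finset.mem_sdiff.1 ha
          refine Finset.mem_sdiff.2 ⟨?_, ?_⟩
          · rw [← himgT]; exact Finset.mem_image_of_mem _ haT
          · intro hfB
            rw [← himgB] at hfB
            obtain ⟨b, hb, hba⟩ := Finset.mem_image.1 hfB
            exact haB (hinj (Finset.mem_coe.2 (hTS (hBT hb)))
              (Finset.mem_coe.2 (hTS haT)) hba ▸ hb)
        · rw [Finset.card_image_of_injOn
            (fun a ha b hb h => hinj (Finset.mem_coe.2 (hTS (Finset.mem_sdiff.1 ha).1))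
              (Finset.mem_coe.2 (hTS (Finset.mem_sdiff.1 hb).1)) h)]
      have IH := ih (S \ B) (Finset.sdiff_ssubset (hBT.trans hTS) hBne)
        (Finset.sdiff_subset.trans hS) (T \ B) hTB_SB himgTB
      have hset : (S \ B) \ (T \ B) = S \ T := by
        ext x
        simp only [Finset.mem_sdiff]
        constructor
        · rintro ⟨⟨hxS, hxB⟩, h⟩
          exact ⟨hxS, fun hxT => h ⟨hxT, hxB⟩⟩
        · rintro ⟨hxS, hxT⟩
          exact ⟨⟨hxS, fun hxB => hxT (hBT hxB)⟩, fun h => hxT h.1⟩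
      have hi' : i ∈ (S \ B) \ (T \ B) := by rw [hset]; exact hi
      have hi'' : i ∈ S \ B :=
        Finset.mem_sdiff.2 ⟨hiS, fun hxB => hiT (hBT hxB)⟩
      calc TTCaux (favOf R) (S \ T) i
          = TTCaux (favOf R) ((S \ B) \ (T \ B)) i := by rw [hset]
        _ = TTCaux (favOf R) (S \ B) i := IH i hi'
        _ = TTCaux (favOf R) S i := OI i hi''


/-- restricting the preferences to a submarket does not change the procedure -/
lemma TTCaux_restr (hJ : J ⊆ I') :
    ∀ S : Finset I, S ⊆ J → ∀ i,
      TTCaux (favOf (fun j => restr J (R j))) S i = TTCaux (favOf R) S i := by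
  intro S
  induction S using Finset.strongInduction with
  | _ S ih =>
    intro hSJ i
    have hSI : S ⊆ I' := hSJ.trans hJ
    have hfe : ∀ j ∈ S, favOf (fun j => restr J (R j)) j S = favOf R j S := by
      intro j hj
      exact bestIn_restr (hR j (hSI hj)) hJ hSJ ⟨j, hj⟩
    have hcl : ∀ x ∈ S, favOf R x S ∈ S := fun x hx => fav_mem hR hSI hx
    have hCeq : cyclicAgents (favOf (fun j => restr J (R j))) S
        = cyclicAgents (favOf R) S := by
      ext x
      rw [mem_cyclicAgents, mem_cyclicAgents]
      constructor
      · rintro ⟨hxS, k, hk, hper⟩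
        exact ⟨hxS, k, hk,
          (iter_congr hcl (fun y hy => (hfe y hy).symm) hxS (k+1)).trans hper⟩
      · rintro ⟨hxS, k, hk, hper⟩
        exact ⟨hxS, k, hk,
          (iter_congr hcl (fun y hy => (hfe y hy).symm) hxS (k+1)).symm.trans hper⟩
    by_cases hC : (cyclicAgents (favOf R) S).Nonempty
    · by_cases hiC : i ∈ cyclicAgents (favOf R) S
      · rw [TTCaux_of_mem (hCeq ▸ hC) (hCeq ▸ hiC), TTCaux_of_mem hC hiC]
        exact hfe i (cyclicAgents_subset _ _ hiC)
      · rw [TTCaux_of_notMem (hCeq ▸ hC) (hCeq ▸ hiC), TTCaux_of_notMem hC hiC, hCeq]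
        exact ih _ (Finset.sdiff_ssubset (cyclicAgents_subset _ _) hC)
          (Finset.sdiff_subset.trans hSJ) i
    · rw [TTCaux_of_empty (hCeq ▸ hC), TTCaux_of_empty hC]

/-- TTC is locally unanimous -/
lemma TTC_LU (hJ : J ⊆ I') {μ : I → I} (hbij : Set.BijOn μ ↑J ↑J)
    (htop : ∀ i ∈ J, ∀ o ∈ I', o ≠ μ i → R i (μ i) o) :
    ∀ i ∈ J, TTCaux (favOf R) I' i = μ i := by
  intro i hiJ
  set f : I → I := fun j => favOf R j I' with hf
  have hfμ : ∀ j ∈ J, f j = μ j := by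
    intro j hj
    have hp := hR j (hJ hj)
    exact bestIn_eq hp.2.2.1 hp.2.2.2 (hJ (Finset.mem_coe.1 (hbij.mapsTo (Finset.mem_coe.2 hj))))
      (fun x hx hxm => htop j hj x hx hxm)
  have hcl : ∀ x ∈ J, f x ∈ J := by
    intro x hx
    rw [hfμ x hx]
    exact Finset.mem_coe.1 (hbij.mapsTo (Finset.mem_coe.2 hx))
  have hinjJ : Set.InjOn f ↑J := by
    intro a ha b hb hab
    refine hbij.injOn ha hb ?_
    rw [← hfμ a (Finset.mem_coe.1 ha), ← hfμ b (Finset.mem_coe.1 hb), hab]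
  have horb : ∀ t, f^[t] i ∈ J := iter_mem hcl hiJ
  obtain ⟨t1, ht1, t2, ht2, hne12, heq⟩ :=
    Finset.exists_ne_map_eq_of_card_lt_of_maps_to
      (s := Finset.range (J.card + 1)) (t := J) (by simp) (fun t _ => horb t)
  have key : ∀ u v : ℕ, u < v → f^[u] i = f^[v] i → f^[v - u] i = i := by
    intro u v huv hiuv
    have h1 : f^[u] (f^[v - u] i) = f^[u] i := by
      rw [← Function.iterate_add_apply, Nat.add_sub_cancel' (le_of_lt huv) , ← hiuv]
    exact iter_injOn hcl hinjJ u _ (horb _) i hiJ h1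
  have hper : ∃ m, 0 < m ∧ f^[m] i = i := by
    rcases Nat.lt_trichotomy t1 t2 with h | h | h
    · exact ⟨t2 - t1, by omega, key t1 t2 h heq⟩
    · exact absurd h hne12
    · exact ⟨t1 - t2, by omega, key t2 t1 h heq.symm⟩
  obtain ⟨m, hm0, hmi⟩ := hper
  obtain ⟨k, hk, hki⟩ := exists_small_period (S := I') (fun t => hJ (horb t)) hm0 hmi
  have hicyc : i ∈ cyclicAgents (favOf R) I' :=
    mem_cyclicAgents.2 ⟨hJ hiJ, k, Finset.mem_range.1 hk, hki⟩
  rw [TTCaux_of_mem ⟨i, hicyc⟩ hicyc]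
  exact hfμ i hiJ

end Core

end Aux

/-- On any consistent preference domain in the
variable-population housing market model, a mechanism is locally unanimous and
consistent if and only if it equals the TTC mechanism in every market. -/
theorem stmt_7 {I : Type*} [DecidableEq I] [Fintype I] (hn : 3 ≤ Fintype.card I)
    (D : Domain I) (hDpref : ∀ I' : Finset I, ∀ r ∈ D I', IsPrefOn I' r)
    (hDcons : ConsistentDomain D)
    (ψ : Finset I → (I → I → I → Prop) → I → I)
    (hψ : ∀ I' : Finset I, I'.Nonempty → ∀ R : I → I → I → Prop,
      (∀ i ∈ I', R i ∈ D I') → Set.BijOn (ψ I' R) ↑I' ↑I') :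
    (LocallyUnanimousV D ψ ∧ ConsistentMechV D ψ) ↔
      ∀ I' : Finset I, I'.Nonempty → ∀ R : I → I → I → Prop, (∀ i ∈ I', R i ∈ D I') →
        ∀ i ∈ I', ψ I' R i = TTCv I' R i := by
  classical
  constructor
  · rintro ⟨hLU, hCons⟩
    intro I'
    induction I' using Finset.strongInduction with
    | _ I' ih =>
      intro hne R hD i hi
      have hR : ∀ j ∈ I', IsPrefOn I' (R j) := fun j hj => hDpref I' (R j) (hD j hj)
      set C := cyclicAgents (favOf R) I' with hCdef
      have hC : C.Nonempty := cyc_nonempty hR (Finset.Subset.refl I') hne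
      have hCS : C ⊆ I' := cyclicAgents_subset _ _
      have hfS : ∀ x ∈ I', favOf R x I' ∈ I' :=
        fun x hx => fav_mem hR (Finset.Subset.refl I') hx
      have hμbij : Set.BijOn (fun j => favOf R j I') ↑C ↑C := by
        refine ⟨fun x hx => ?_, fun a ha b hb h => cyc_inj ha hb h, fun x hx => ?_⟩
        · exact_mod_cast cyc_closed hfS (by exact_mod_cast hx)
        · have hxi : x ∈ C.image (fun j => favOf R j I') := by
            rw [cyc_image hfS]; exact_mod_cast hx
          obtain ⟨a, ha, rfl⟩ := Finset.mem_image.1 hxi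
          exact ⟨a, by exact_mod_cast ha, rfl⟩
      have hstep : ∀ j ∈ C, ψ I' R j = favOf R j I' :=
        hLU I' hne R hD C hCS hC _ hμbij
          (fun j hj o ho hne' => fav_top hR (Finset.Subset.refl I') (hCS hj) o ho hne')
      have hTTCv : TTCv I' R = TTCaux (favOf R) I' := rfl
      by_cases hiC : i ∈ C
      · rw [hstep i hiC, hTTCv, TTCaux_of_mem hC hiC]
      · set J := I' \ C with hJdef
        have hiJ : i ∈ J := Finset.mem_sdiff.2 ⟨hi, hiC⟩
        have hJne : J.Nonempty := ⟨i, hiJ⟩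
        have hJsub : J ⊆ I' := Finset.sdiff_subset
        have hIJ : I' \ J = C := by
          rw [hJdef, Finset.sdiff_sdiff_self_left, Finset.inter_eq_right.mpr hCS]
        have himg : (I' \ J).image (fun x => ψ I' R x) = I' \ J := by
          rw [hIJ]
          rw [Finset.image_congr (g := fun j => favOf R j I')
            (fun a ha => hstep a (Finset.mem_coe.1 ha))]
          exact cyc_image hfS
        have hred := hCons I' hne R hD J hJsub hJne himg i hiJ
        have hD' : ∀ j ∈ J, restr J (R j) ∈ D J :=
          fun j hj => hDcons I' (R j) (hD j (hJsub hj)) J hJsub hJne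
        have hJss : J ⊂ I' := Finset.sdiff_ssubset hCS hC
        have ihJ := ih J hJss hJne (fun j => restr J (R j)) hD' i hiJ
        have hres : TTCv J (fun j => restr J (R j)) i = TTCaux (favOf R) J i :=
          TTCaux_restr hR hJsub J (Finset.Subset.refl J) i
        rw [← hred, ihJ, hres, hTTCv, TTCaux_of_notMem hC hiC]
  · intro hTTC
    constructor
    · intro I' hne R hD J hJsub hJne μ hbij htop i hiJ
      have hR : ∀ j ∈ I', IsPrefOn I' (R j) := fun j hj => hDpref I' (R j) (hD j hj)
      rw [hTTC I' hne R hD i (hJsub hiJ)]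
      exact TTC_LU hR hJsub hbij htop i hiJ
    · intro I' hne R hD J hJsub hJne himg i hiJ
      have hR : ∀ j ∈ I', IsPrefOn I' (R j) := fun j hj => hDpref I' (R j) (hD j hj)
      have hD' : ∀ j ∈ J, restr J (R j) ∈ D J :=
        fun j hj => hDcons I' (R j) (hD j (hJsub hj)) J hJsub hJne
      have hT : (I' \ J).image (TTCaux (favOf R) I') = I' \ J := by
        have he : (I' \ J).image (TTCaux (favOf R) I')
            = (I' \ J).image (fun x => ψ I' R x) := by
          apply Finset.image_congr
          intro x hx
          exact (hTTC I' hne R hD x (Finset.sdiff_subset (Finset.mem_coe.1 hx))).symm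
        rw [he, himg]
      have hJset : I' \ (I' \ J) = J := by
        rw [Finset.sdiff_sdiff_self_left, Finset.inter_eq_right.mpr hJsub]
      have hiJ' : i ∈ I' \ (I' \ J) := by rw [hJset]; exact hiJ
      have hcons := TTC_CONS hR I' (Finset.Subset.refl I') (I' \ J)
        Finset.sdiff_subset hT i hiJ'
      rw [hJset] at hcons
      rw [hTTC J hJne (fun j => restr J (R j)) hD' i hiJ,
        hTTC I' hne R hD i (hJsub hiJ)]
      have h1 : TTCv J (fun j => restr J (R j)) i = TTCaux (favOf R) J i :=
        TTCaux_restr hR hJsub J (Finset.Subset.refl J) i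
      rw [h1]
      exact hcons
end

section
/- In the weak-preference variable-population housing market model with the universal domain, every mechanism that is locally unanimous, strategy-proof, and non-bossy is weakly Pareto efficient: in no economy does there exist an allocation μ with μ(i) strictly ⪰_i-preferred to the mechanism's assignment for every agent i. -/
/- Weak-preference variable-population housing market model (Shapley–Scarf).
Agents and objects are identified: `I` is the grand finite set of agents and
object `i` (the endowment of agent `i`) is identified with `i`. A market is a
nonempty `I' : Finset I` with object set `O_{I'} = I'`. A weak preference of
agent `i` on `O_{I'}` is encoded as a relation `R : I → I → Prop` supported on
`I'` (`R a b` meaning "`a` is weakly preferred to `b`") that is complete and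
transitive on `I'` and never treats the endowment `i` as indifferent to
another object (the universal domain consists of all such relations, these
being exactly the restrictions to `O_{I'}` of the members of `𝒰_i`). An
economy in market `I'` is a profile `R : I → I → I → Prop` with `R i` the
preference of agent `i` (only the components of agents `i ∈ I'` matter). A
mechanism assigns to every economy an assignment `I → I` (an allocation being
a bijection of `I'` onto itself). -/

open Finset

variable {I : Type*} [DecidableEq I]

/-- `R` is an admissible weak preference of agent `i` on the objects
`O_{I'} = I'`: supported on `I'`, complete and transitive on `I'`, and the
endowment `i` is not indifferent to any other object. -/
def IsWeakPrefOn (I' : Finset I) (i : I) (R : I → I → Prop) : Prop :=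
  (∀ a b, R a b → a ∈ I' ∧ b ∈ I') ∧
  (∀ a ∈ I', ∀ b ∈ I', R a b ∨ R b a) ∧
  (∀ a b c, R a b → R b c → R a c) ∧
  (∀ o ∈ I', o ≠ i → ¬ (R o i ∧ R i o))

/-- The restriction of a preference to the objects `O_J = J`. -/
def restrW (J : Finset I) (R : I → I → Prop) : I → I → Prop :=
  fun a b => R a b ∧ a ∈ J ∧ b ∈ J

/-- The strict linear order obtained from the weak preference `R` by breaking
every indifference according to the tie-breaker `t` (`a` is preferred to `b`
iff `a ≻ b`, or `a ∼ b` and the tie-breaker favors `a`). -/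
def tieBreak (R : I → I → Prop) (t : LinearOrder I) : I → I → Prop :=
  fun a b => (R a b ∧ ¬ R b a) ∨ (R a b ∧ R b a ∧ t.lt b a)

/-- `TTC^▷`: the Top Trading Cycles mechanism with fixed tie-breakers
`T = (▷_i)_{i ∈ I}`, applied in market `I'` to the transformed strict profile. -/
noncomputable def TTCtb (T : I → LinearOrder I) (I' : Finset I)
    (R : I → I → I → Prop) : I → I :=
  TTCaux (fun i S => bestIn (tieBreak (R i) (T i)) S i) I'

/-- Local unanimity (weak-preference version): in every economy, whenever a
nonempty set `J` of agents admits a unanimously best suballocation `μ`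
(a bijection of `J` onto `O_J = J` giving every member of `J` his *unique*
best object of `O_{I'}`), the mechanism implements `μ` on `J`. -/
def LocallyUnanimousW (ψ : Finset I → (I → I → I → Prop) → I → I) : Prop :=
  ∀ I' : Finset I, I'.Nonempty → ∀ R : I → I → I → Prop,
    (∀ i ∈ I', IsWeakPrefOn I' i (R i)) →
    ∀ J : Finset I, J ⊆ I' → J.Nonempty → ∀ μ : I → I, Set.BijOn μ ↑J ↑J →
      (∀ i ∈ J, ∀ o ∈ I', o ≠ μ i → R i (μ i) o ∧ ¬ R i o (μ i)) →
      ∀ i ∈ J, ψ I' R i = μ i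

/-- Consistency of a mechanism: if the agents of `I' ∖ J` are assigned exactly
the objects `O_{I' ∖ J}` and are removed, every remaining agent receives the
same object in the reduced economy on `J`. -/
def ConsistentW (ψ : Finset I → (I → I → I → Prop) → I → I) : Prop :=
  ∀ I' : Finset I, I'.Nonempty → ∀ R : I → I → I → Prop,
    (∀ i ∈ I', IsWeakPrefOn I' i (R i)) →
    ∀ J : Finset I, J ⊆ I' → J.Nonempty →
      (I' \ J).image (fun i => ψ I' R i) = I' \ J →
      ∀ i ∈ J, ψ J (fun j => restrW J (R j)) i = ψ I' R i

/-- Strategy-proofness (weak-preference version): no agent can obtain a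
strictly better object by misreporting. -/
def StrategyProofW (ψ : Finset I → (I → I → I → Prop) → I → I) : Prop :=
  ∀ I' : Finset I, I'.Nonempty → ∀ R : I → I → I → Prop,
    (∀ i ∈ I', IsWeakPrefOn I' i (R i)) →
    ∀ i ∈ I', ∀ R' : I → I → Prop, IsWeakPrefOn I' i R' →
      ¬ (R i (ψ I' (Function.update R i R') i) (ψ I' R i) ∧
         ¬ R i (ψ I' R i) (ψ I' (Function.update R i R') i))

/-- Non-bossiness: no agent can change the allocation without changing his own
assignment. -/
def NonBossyW (ψ : Finset I → (I → I → I → Prop) → I → I) : Prop :=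
  ∀ I' : Finset I, I'.Nonempty → ∀ R : I → I → I → Prop,
    (∀ i ∈ I', IsWeakPrefOn I' i (R i)) →
    ∀ i ∈ I', ∀ R' : I → I → Prop, IsWeakPrefOn I' i R' →
      ψ I' (Function.update R i R') i = ψ I' R i →
      ∀ j ∈ I', ψ I' (Function.update R i R') j = ψ I' R j

/-- Rank function: `a` best, then `b`, then the endowment `k`, then the rest. -/
def rnkD {I : Type*} [DecidableEq I] (a b k x : I) : ℕ :=
  if x = a then 0 else if x = b then 1 else if x = k then 2 else 3

/-- The weak preference on `I'` induced by `rnkD`. -/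
def prefD {I : Type*} [DecidableEq I] (I' : Finset I) (a b k : I) : I → I → Prop :=
  fun x y => x ∈ I' ∧ y ∈ I' ∧ rnkD a b k x ≤ rnkD a b k y

lemma prefD_adm {I : Type*} [DecidableEq I] (I' : Finset I) (a b k : I) :
    IsWeakPrefOn I' k (prefD I' a b k) := by
  refine ⟨fun x y h => ⟨h.1, h.2.1⟩, fun x hx y hy => ?_,
    fun x y z h1 h2 => ⟨h1.1, h2.2.1, le_trans h1.2.2 h2.2.2⟩, ?_⟩
  · rcases le_total (rnkD a b k x) (rnkD a b k y) with h | h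
    · exact Or.inl ⟨hx, hy, h⟩
    · exact Or.inr ⟨hy, hx, h⟩
  · rintro o ho hok ⟨⟨_, _, h1⟩, ⟨_, _, h2⟩⟩
    apply hok
    have h : rnkD a b k o = rnkD a b k k := le_antisymm h1 h2
    unfold rnkD at h
    split_ifs at h <;> simp_all

lemma rnkD_le_one {I : Type*} [DecidableEq I] {a b k x : I}
    (h : rnkD a b k x ≤ 1) : x = a ∨ x = b := by
  unfold rnkD at h
  split_ifs at h <;> simp_all

lemma prefD_top {I : Type*} [DecidableEq I] {I' : Finset I} {a : I} (ha : a ∈ I') (b k : I) :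
    ∀ o ∈ I', o ≠ a → prefD I' a b k a o ∧ ¬ prefD I' a b k o a := by
  intro o ho hoa
  constructor
  · exact ⟨ha, ho, by simp [rnkD]⟩
  · rintro ⟨_, _, h⟩
    unfold rnkD at h
    split_ifs at h <;> simp_all

/-- In the weak-preference variable-population housing market
model with the universal domain, every mechanism that is locally unanimous,
strategy-proof, and non-bossy is weakly Pareto efficient: in no economy does
there exist an allocation making every agent strictly better off. -/
theorem stmt_11 {I : Type*} [DecidableEq I] [Fintype I] (hn : 3 ≤ Fintype.card I)
    (ψ : Finset I → (I → I → I → Prop) → I → I)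
    (hψ : ∀ I' : Finset I, I'.Nonempty → ∀ R : I → I → I → Prop,
      (∀ i ∈ I', IsWeakPrefOn I' i (R i)) → Set.BijOn (ψ I' R) ↑I' ↑I')
    (hLU : LocallyUnanimousW ψ) (hSP : StrategyProofW ψ) (hNB : NonBossyW ψ) :
    ∀ I' : Finset I, I'.Nonempty → ∀ R : I → I → I → Prop,
      (∀ i ∈ I', IsWeakPrefOn I' i (R i)) →
      ¬ ∃ μ : I → I, Set.BijOn μ ↑I' ↑I' ∧
          ∀ i ∈ I', R i (μ i) (ψ I' R i) ∧ ¬ R i (ψ I' R i) (μ i) := by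
  classical
  intro I' hne R hR
  rintro ⟨μ, hμ, hdom⟩
  set f := ψ I' R with hfdef
  have hfmem : ∀ i ∈ I', f i ∈ I' := fun i hi =>
    Finset.mem_coe.mp ((hψ I' hne R hR).1 (Finset.mem_coe.mpr hi))
  have hμmem : ∀ i ∈ I', μ i ∈ I' := fun i hi =>
    Finset.mem_coe.mp (hμ.1 (Finset.mem_coe.mpr hi))
  have hμnef : ∀ i ∈ I', μ i ≠ f i := by
    intro i hi heq
    have h := hdom i hi
    rw [heq] at h
    exact h.2 h.1
  set R' : I → I → I → Prop := fun k => prefD I' (μ k) (f k) k with hR'def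
  have hR'adm : ∀ k, IsWeakPrefOn I' k (R' k) := fun k => prefD_adm I' _ _ _
  have key : ∀ S : Finset I, S ⊆ I' →
      ∀ j ∈ I', ψ I' (fun i => if i ∈ S then R' i else R i) j = f j := by
    intro S
    induction S using Finset.induction_on with
    | empty =>
        intro _ j hj
        have hempty : (fun i => if i ∈ (∅ : Finset I) then R' i else R i) = R := by
          funext i; simp
        rw [hempty]
    | @insert k S hk ih =>
        intro hsub j hj
        have hkI : k ∈ I' := hsub (mem_insert_self k S)
        have hS : S ⊆ I' := fun x hx => hsub (mem_insert_of_mem hx)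
        set Q : I → I → I → Prop := fun i => if i ∈ S then R' i else R i with hQdef
        have hQadm : ∀ i ∈ I', IsWeakPrefOn I' i (Q i) := by
          intro i hi
          rw [hQdef]
          by_cases h : i ∈ S
          · simp only [h, if_true]; exact hR'adm i
          · simp only [h, if_false]; exact hR i hi
        have ihQ : ∀ j ∈ I', ψ I' Q j = f j := ih hS
        set Q' : I → I → I → Prop := Function.update Q k (R' k) with hQ'def
        have hins : (fun i => if i ∈ insert k S then R' i else R i) = Q' := by
          funext i
          by_cases hik : i = k
          · subst hik
            rw [hQ'def, Function.update_self]
            simp [Finset.mem_insert]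
          · rw [hQ'def, Function.update_of_ne hik, hQdef]
            simp [Finset.mem_insert, hik]
        have hQ'adm : ∀ i ∈ I', IsWeakPrefOn I' i (Q' i) := by
          intro i hi
          by_cases hik : i = k
          · subst hik; rw [hQ'def, Function.update_self]; exact hR'adm i
          · rw [hQ'def, Function.update_of_ne hik]; exact hQadm i hi
        have hQkR : Q k = R k := by rw [hQdef]; simp [hk]
        have hback : Function.update Q' k (R k) = Q := by
          funext i
          by_cases hik : i = k
          · subst hik; rw [Function.update_self, hQkR]
          · rw [Function.update_of_ne hik, hQ'def, Function.update_of_ne hik]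
        have hQ'k : ψ I' Q' k ∈ I' :=
          Finset.mem_coe.mp ((hψ I' hne Q' hQ'adm).1 (Finset.mem_coe.mpr hkI))
        have hfk : f k ∈ I' := hfmem k hkI
        have hQk : ψ I' Q k = f k := ihQ k hkI
        -- SP at Q' (truth `R' k`, deviation to `R k`)
        have hsp1 := hSP I' hne Q' hQ'adm k hkI (R k) (hR k hkI)
        rw [hback] at hsp1
        have hQ'kdef : Q' k = R' k := by rw [hQ'def]; exact Function.update_self k (R' k) Q
        rw [hQ'kdef, hQk] at hsp1
        have hwp : R' k (ψ I' Q' k) (f k) := by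
          rcases (hR'adm k).2.1 (f k) hfk (ψ I' Q' k) hQ'k with h | h
          · by_contra hcon; exact hsp1 ⟨h, hcon⟩
          · exact h
        have hle : rnkD (μ k) (f k) k (ψ I' Q' k) ≤ 1 := by
          have h1 := hwp.2.2
          have h2 : rnkD (μ k) (f k) k (f k) ≤ 1 := by
            unfold rnkD; split_ifs <;> simp_all
          omega
        rcases rnkD_le_one hle with hcase | hcase
        · -- `ψ Q' k = μ k`: contradiction with SP at Q
          exfalso
          have hsp2 := hSP I' hne Q hQadm k hkI (R' k) (hR'adm k)
          have hupd : Function.update Q k (R' k) = Q' := hQ'def.symm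
          rw [hupd, hQkR, hQk, hcase] at hsp2
          exact hsp2 (hdom k hkI)
        · -- `ψ Q' k = f k = ψ Q k`: non-bossiness
          have heq : ψ I' (Function.update Q k (R' k)) k = ψ I' Q k := by
            rw [hQ'def.symm, hcase, hQk]
          have hnb := hNB I' hne Q hQadm k hkI (R' k) (hR'adm k) heq j hj
          rw [hins, ← hQ'def.symm]
          calc ψ I' (Function.update Q k (R' k)) j = ψ I' Q j := hnb
            _ = f j := ihQ j hj
  -- conclude with local unanimity at the fully-switched profile
  set P : I → I → I → Prop := fun i => if i ∈ I' then R' i else R i with hPdef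
  have hP : ∀ j ∈ I', ψ I' P j = f j := key I' Finset.Subset.rfl
  have hPadm : ∀ i ∈ I', IsWeakPrefOn I' i (P i) := by
    intro i hi
    rw [hPdef]
    simp only [hi, if_true]
    exact hR'adm i
  have htop : ∀ i ∈ I', ∀ o ∈ I', o ≠ μ i → P i (μ i) o ∧ ¬ P i o (μ i) := by
    intro i hi o ho hneq
    have hPi : P i = R' i := by rw [hPdef]; simp [hi]
    rw [hPi, hR'def]
    exact prefD_top (hμmem i hi) (f i) i o ho hneq
  have hLUres := hLU I' hne P hPadm I' Finset.Subset.rfl hne μ hμ htop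
  obtain ⟨i, hi⟩ := hne
  exact hμnef i hi ((hLUres i hi).symm.trans (hP i hi))
end

section
/- In the weak-preference variable-population housing market model with the universal domain, every mechanism that is locally unanimous and strategy-proof is individually rational: in every economy, each agent's assigned object is weakly ⪰_i-preferred to his endowment o_i. -/
/- Weak-preference variable-population housing market model (Shapley–Scarf).
Agents and objects are identified: `I` is the grand finite set of agents and
object `i` (the endowment of agent `i`) is identified with `i`. A market is a
nonempty `I' : Finset I` with object set `O_{I'} = I'`. A weak preference of
agent `i` on `O_{I'}` is encoded as a relation `R : I → I → Prop` supported on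
`I'` (`R a b` meaning "`a` is weakly preferred to `b`") that is complete and
transitive on `I'` and never treats the endowment `i` as indifferent to
another object (the universal domain consists of all such relations, these
being exactly the restrictions to `O_{I'}` of the members of `𝒰_i`). An
economy in market `I'` is a profile `R : I → I → I → Prop` with `R i` the
preference of agent `i` (only the components of agents `i ∈ I'` matter). A
mechanism assigns to every economy an assignment `I → I` (an allocation being
a bijection of `I'` onto itself). -/

open Finset

variable {I : Type*} [DecidableEq I]

/-- In the weak-preference variable-population housing market
model with the universal domain, every mechanism that is locally unanimous and
strategy-proof is individually rational: in every economy each agent's assigned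
object is weakly preferred to his endowment. -/
theorem stmt_12 {I : Type*} [DecidableEq I] [Fintype I] (hn : 3 ≤ Fintype.card I)
    (ψ : Finset I → (I → I → I → Prop) → I → I)
    (hψ : ∀ I' : Finset I, I'.Nonempty → ∀ R : I → I → I → Prop,
      (∀ i ∈ I', IsWeakPrefOn I' i (R i)) → Set.BijOn (ψ I' R) ↑I' ↑I')
    (hLU : LocallyUnanimousW ψ) (hSP : StrategyProofW ψ) :
    ∀ I' : Finset I, I'.Nonempty → ∀ R : I → I → I → Prop,
      (∀ i ∈ I', IsWeakPrefOn I' i (R i)) →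
      ∀ i ∈ I', R i (ψ I' R i) i := by
  intro I' hne R hR i hi
  -- the misreport: endowment i is the unique top, all other objects indifferent
  set R' : I → I → Prop := fun a b => a ∈ I' ∧ b ∈ I' ∧ (a = i ∨ b ≠ i) with hR'def
  have hR' : IsWeakPrefOn I' i R' := by
    refine ⟨fun a b h => ⟨h.1, h.2.1⟩, ?_, ?_, ?_⟩
    · intro a ha b hb
      by_cases h : a = i
      · exact Or.inl ⟨ha, hb, Or.inl h⟩
      · by_cases h' : b = i
        · exact Or.inr ⟨hb, ha, Or.inl h'⟩
        · exact Or.inl ⟨ha, hb, Or.inr h'⟩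
    · rintro a b c ⟨ha, hb, hab⟩ ⟨_, hc, hbc⟩
      refine ⟨ha, hc, ?_⟩
      rcases hab with h | h
      · exact Or.inl h
      · rcases hbc with h' | h'
        · exact absurd h' h
        · exact Or.inr h'
    · rintro o ho hoi ⟨⟨_, _, h | h⟩, -⟩
      · exact hoi h
      · exact h rfl
  have hRupd : ∀ j ∈ I', IsWeakPrefOn I' j (Function.update R i R' j) := by
    intro j hj
    by_cases h : j = i
    · subst h; simpa using hR'
    · rw [Function.update_of_ne h]; exact hR j hj
  -- local unanimity at J = {i}
  have hLUres : ψ I' (Function.update R i R') i = i := by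
    have := hLU I' hne (Function.update R i R') hRupd {i}
      (by simpa using hi) ⟨i, mem_singleton_self i⟩ id
      (by simp [Set.BijOn]) ?_ i (mem_singleton_self i)
    · simpa using this
    · intro j hj o ho hoj
      rw [Finset.mem_singleton] at hj; subst hj
      simp only [id] at hoj ⊢
      rw [Function.update_self]
      constructor
      · exact ⟨hi, ho, Or.inl rfl⟩
      · rintro ⟨_, _, h | h⟩
        · exact hoj h
        · exact h rfl
  -- strategy-proofness
  have hsp := hSP I' hne R hR i hi R' hR'
  rw [hLUres] at hsp
  have hψi : ψ I' R i ∈ I' := (hψ I' hne R hR).mapsTo hi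
  rcases (hR i hi).2.1 (ψ I' R i) hψi i hi with h | h
  · exact h
  · by_contra hc
    exact hsp ⟨h, hc⟩
end

section
/- For every n ≥ 4, on the single-peaked preference domain (with respect to the order o_1 ▷ o_2 ▷ ⋯ ▷ o_n) there exists a mechanism that is locally unanimous and strategy-proof but is not group strategy-proof and differs from the TTC mechanism. -/
/- Housing market model (Shapley–Scarf). Agents and objects are identified:
the type `I` is the (finite) set of agents, and object `i` (the endowment of
agent `i`) is identified with `i` itself. A strict preference is a linear
order on `I` (viewed as the set of objects); a preference domain is a set of
linear orders; a mechanism maps preference profiles to assignments `I → I`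
(an allocation being a bijective assignment). -/

open Finset

variable {I : Type*} [DecidableEq I]

/-- The most preferred object of `S` under the linear order `p`
(`d` is a junk default, used only when `S = ∅`). -/
def favIn (p : LinearOrder I) (S : Finset I) (d : I) : I :=
  if h : S.Nonempty then @Finset.max' I p S h else d

/-- The top choice of preference `p` (`d` is a junk default, used only if `I` is empty). -/
def topOf [Fintype I] (p : LinearOrder I) (d : I) : I := favIn p Finset.univ d

/-- The Top Trading Cycles mechanism. -/
def TTC [Fintype I] (P : I → LinearOrder I) : I → I :=
  TTCaux (fun i S => favIn (P i) S i) Finset.univ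

section Axioms

variable [Fintype I]

/-- `ψ` is locally unanimous on the domain `D`: whenever some nonempty set `J`
of agents admits a unanimously best suballocation `μ` (a bijection of `J` onto
its endowment set `O_J = J` giving every member his top choice), `ψ` implements `μ` on `J`. -/
def LocallyUnanimous (D : Set (LinearOrder I)) (ψ : (I → LinearOrder I) → I → I) : Prop :=
  ∀ P : I → LinearOrder I, (∀ i, P i ∈ D) →
    ∀ J : Finset I, J.Nonempty → ∀ μ : I → I, Set.BijOn μ ↑J ↑J →
      (∀ i ∈ J, μ i = topOf (P i) i) → ∀ i ∈ J, ψ P i = μ i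

/-- Strategy-proofness of `ψ` on the domain `D`. -/
def StrategyProof (D : Set (LinearOrder I)) (ψ : (I → LinearOrder I) → I → I) : Prop :=
  ∀ P : I → LinearOrder I, (∀ i, P i ∈ D) → ∀ i : I, ∀ q ∈ D,
    ¬ (P i).lt (ψ P i) (ψ (Function.update P i q) i)

/-- Group strategy-proofness of `ψ` on the domain `D`. -/
def GroupStrategyProof (D : Set (LinearOrder I)) (ψ : (I → LinearOrder I) → I → I) : Prop :=
  ∀ P P' : I → LinearOrder I, (∀ i, P i ∈ D) → (∀ i, P' i ∈ D) →
    ∀ J : Finset I, J.Nonempty → (∀ i ∉ J, P' i = P i) →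
    ¬ ((∀ i ∈ J, (P i).le (ψ P i) (ψ P' i)) ∧ ∃ j ∈ J, (P j).lt (ψ P j) (ψ P' j))

/-- Individual rationality of `ψ` on the domain `D` (agent `i`'s endowment is `i`). -/
def IndividuallyRational (D : Set (LinearOrder I)) (ψ : (I → LinearOrder I) → I → I) : Prop :=
  ∀ P : I → LinearOrder I, (∀ i, P i ∈ D) → ∀ i : I, (P i).le i (ψ P i)

/-- Top-one Richness of the domain `D`. -/
def TopOneRich (D : Set (LinearOrder I)) : Prop :=
  ∀ o : I, ∃ p ∈ D, topOf p o = o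

/-- Top-two Richness of the domain `D`: any two distinct objects can be
reported as the top two choices, in either order. -/
def TopTwoRich (D : Set (LinearOrder I)) : Prop :=
  ∀ o o' : I, o ≠ o' → ∃ p ∈ D, topOf p o = o ∧ ∀ x : I, x ≠ o → p.le x o'

/-- `J` forms a cycle of the pointing map `f`: `J` is nonempty, closed under
`f`, and every member is reachable from every member by iterating `f`. -/
def IsCycleIn (f : I → I) (J : Finset I) : Prop :=
  J.Nonempty ∧ (∀ i ∈ J, f i ∈ J) ∧ ∀ i ∈ J, ∀ j ∈ J, ∃ k : ℕ, f^[k] i = j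

end Axioms

/-- `p` is single-peaked with respect to the order `o_1 ▷ o_2 ▷ ⋯ ▷ o_n` of the
objects (encoded as the natural order on `Fin n`, where `a ▷ b` iff `a < b`). -/
def SinglePeaked {n : ℕ} (p : LinearOrder (Fin n)) : Prop :=
  ∃ peak : Fin n, (∀ o : Fin n, o ≠ peak → p.lt o peak) ∧
    ∀ o o' : Fin n, o ≠ peak → o' ≠ peak → o ≠ o' →
      ((o < o' ∧ o' < peak) ∨ (peak < o' ∧ o' < o)) → p.lt o o'

/-! TTC is strategy-proof and locally unanimous, so we perturb it at a single single-peaked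
profile `Pstar`. There agents `1` and `3` have peak `0`, agent `0` has peak `2` and ranks `3`
above `1` and `0`, and every other agent owns his peak. TTC lets the owners of their peaks keep
them, then trades `0 ↔ 3` and leaves `1` his endowment; `psi` instead lets agents `1` and `3`
exchange these assignments at `Pstar`, so `1` receives his top `0` and `3` only gets `1`.

No unanimously best suballocation at `Pstar` involves `0`, `1` or `3`, so local unanimity
survives. For strategy-proofness only agents `1` and `3` need care. Whatever agent `1` reports,
TTC leaves him his endowment, which he prefers to `0` unless he has peak `0`. Whatever agent `3`
reports, TTC gives him his favourite among `0, 1, 3` under that report, which is never `0` when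
the report differs from his preference at `Pstar`, since a single-peaked preference not peaked
at `0` prefers `1` to `0`. Group strategy-proofness fails: if agent `0` truly has peak `3`,
reporting peak `2` still gets him `3` and moves the profile to `Pstar`, where agent `1` gains.

TTC is analysed through the periodic points of its pointing maps; the main tool is that a union
of trading cycles may be removed first without changing anybody else's assignment. -/

open Function

section Dynamics

variable {α : Type*} {f g : α → α} {x : α}

lemma iterate_eq_of_forall_lt {m : ℕ} (h : ∀ l < m, g (f^[l] x) = f (f^[l] x)) :
    g^[m] x = f^[m] x := by
  induction m with
  | zero => rfl
  | succ m ih =>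
    rw [iterate_succ_apply', iterate_succ_apply', ih fun l hl => h l (by omega), h m (by omega)]

lemma mem_of_iterate_mem_of_mem_periodicPts {s : Set α} (hs : Set.MapsTo f s s)
    (hx : x ∈ periodicPts f) {k : ℕ} (hk : f^[k] x ∈ s) : x ∈ s := by
  obtain ⟨n, hn, hper⟩ := mem_periodicPts.mp hx
  have hle : k ≤ n * (k + 1) := by nlinarith
  have hback : f^[n * (k + 1) - k] (f^[k] x) = x := by
    rw [← iterate_add_apply, Nat.sub_add_cancel hle]; exact (hper.mul_const _).eq
  exact hback ▸ hs.iterate _ hk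

lemma mem_periodicPts_of_eq_off {i : α} (hx : x ∈ periodicPts f) (hi : i ∉ periodicPts f)
    (hgf : ∀ y ≠ i, g y = f y) : x ∈ periodicPts g := by
  obtain ⟨n, hn, hper⟩ := mem_periodicPts.mp hx
  have hagree : ∀ l, g (f^[l] x) = f (f^[l] x) := fun l =>
    hgf _ fun h => hi (h ▸ (bijOn_periodicPts f).mapsTo.iterate l hx)
  exact mk_mem_periodicPts hn ((iterate_eq_of_forall_lt fun l _ => hagree l).trans hper.eq)

lemma exists_iterate_apply_eq_of_mem_periodicPts' (hx : x ∈ periodicPts f) :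
    ∃ m, f^[m] (f x) = x := by
  obtain ⟨n, hn, hper⟩ := mem_periodicPts.mp hx
  refine ⟨n - 1, ?_⟩
  rw [← iterate_succ_apply, Nat.succ_eq_add_one, Nat.sub_add_cancel hn]
  exact hper

lemma exists_mem_periodicPts_of_mapsTo {s : Finset α} (hs : Set.MapsTo f s s)
    (hne : s.Nonempty) : ∃ y ∈ s, y ∈ periodicPts f := by
  obtain ⟨x, hx⟩ := hne
  obtain ⟨a, b, hab, heq⟩ := s.finite_toSet.exists_lt_map_eq_of_forall_mem
    (f := fun k => f^[k] x) fun k => hs.iterate k hx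
  refine ⟨f^[a] x, hs.iterate a hx, mk_mem_periodicPts (n := b - a) (by omega) ?_⟩
  change f^[b - a] (f^[a] x) = f^[a] x
  rw [← iterate_add_apply, Nat.sub_add_cancel hab.le]; exact heq.symm

lemma minimalPeriod_le_card_of_mapsTo {s : Finset α} (hs : Set.MapsTo f s s) (hx : x ∈ s) :
    minimalPeriod f x ≤ s.card := by
  simpa using card_le_card_of_injOn (s := range (minimalPeriod f x)) (f^[·] x)
    (fun k _ => hs.iterate k hx)
    (fun a ha b hb => iterate_injOn_Iio_minimalPeriod (by simpa using ha) (by simpa using hb))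

lemma mem_periodicPts_of_injOn {s : Set α} [Finite s] (hs : Set.MapsTo f s s)
    (hinj : Set.InjOn f s) (hx : x ∈ s) : x ∈ periodicPts f :=
  Semiconj.mapsTo_periodicPts (g := Subtype.val) (fb := f) (fun _ => rfl)
    ((hs.restrict_inj.mpr hinj).mem_periodicPts ⟨x, hx⟩)

lemma mem_periodicPts_of_apply_eq_of_apply_eq {a b : α} (hab : f a = b) (hba : f b = a) :
    a ∈ periodicPts f :=
  mk_mem_periodicPts two_pos (show f (f a) = a by rw [hab, hba])

lemma mem_periodicPts_of_apply_eq_of_apply_eq_of_apply_mem {a b c : α} (ha : f a = c)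
    (hb : f b = a) (hc : f c = a ∨ f c = b ∨ f c = c) : c ∈ periodicPts f := by
  rcases hc with hc | hc | hc
  · exact mem_periodicPts_of_apply_eq_of_apply_eq hc ha
  · exact mk_mem_periodicPts three_pos (show f (f (f c)) = c by rw [hc, hb, ha])
  · exact mk_mem_periodicPts one_pos hc

end Dynamics

section TTC

variable (P : I → LinearOrder I)

def pointing (S : Finset I) (j : I) : I := favIn (P j) S j

def TTCOn (S : Finset I) : I → I := TTCaux (fun j S => pointing P S j) S

abbrev traders (S : Finset I) : Finset I := cyclicAgents (fun j S => pointing P S j) S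

lemma TTC_eq_TTCOn_univ [Fintype I] : TTC P = TTCOn P univ := rfl

variable {P}

omit [DecidableEq I] in
lemma favIn_mem (p : LinearOrder I) {S : Finset I} (hS : S.Nonempty) (d : I) :
    favIn p S d ∈ S := by
  rw [favIn, dif_pos hS]; exact @max'_mem I p S hS

omit [DecidableEq I] in
lemma le_favIn (p : LinearOrder I) {S : Finset I} {y : I} (hy : y ∈ S) (d : I) :
    p.le y (favIn p S d) := by
  rw [favIn, dif_pos ⟨y, hy⟩]; exact @le_max' I p S y hy

omit [DecidableEq I] in
lemma favIn_eq_of_forall_le (p : LinearOrder I) {S : Finset I} {x : I} (hx : x ∈ S)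
    (h : ∀ y ∈ S, p.le y x) (d : I) : favIn p S d = x :=
  p.le_antisymm _ _ (h _ (favIn_mem p ⟨x, hx⟩ d)) (le_favIn p hx d)

omit [DecidableEq I] in
lemma pointing_of_subset {S T : Finset I} (hTS : T ⊆ S) {j : I} (hj : pointing P S j ∈ T) :
    pointing P T j = pointing P S j :=
  favIn_eq_of_forall_le (P j) hj (fun _ hy => le_favIn (P j) (hTS hy) j) j

omit [DecidableEq I] in
lemma mapsTo_pointing (S : Finset I) : Set.MapsTo (pointing P S) S S :=
  fun j hj => favIn_mem (P j) ⟨j, hj⟩ j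

lemma pointing_update_of_ne {i j : I} (q : LinearOrder I) (h : j ≠ i) (S : Finset I) :
    pointing (update P i q) S j = pointing P S j := by
  rw [pointing, pointing, update_of_ne h]

lemma mem_traders {S : Finset I} {i : I} :
    i ∈ traders P S ↔ i ∈ S ∧ i ∈ periodicPts (pointing P S) := by
  simp only [traders, cyclicAgents, mem_filter, mem_range, and_congr_right_iff]
  refine fun hi => ⟨fun ⟨k, _, hk⟩ => mk_mem_periodicPts k.succ_pos hk, fun hper => ?_⟩
  have hpos := minimalPeriod_pos_of_mem_periodicPts hper
  have hle := minimalPeriod_le_card_of_mapsTo (mapsTo_pointing (P := P) S) hi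
  refine ⟨minimalPeriod (pointing P S) i - 1, by omega, ?_⟩
  rw [Nat.sub_add_cancel hpos]
  exact iterate_minimalPeriod

lemma sdiff_traders_ssubset {S : Finset I} (hS : S.Nonempty) : S \ traders P S ⊂ S := by
  obtain ⟨y, hy, hper⟩ := exists_mem_periodicPts_of_mapsTo (mapsTo_pointing (P := P) S) hS
  exact sdiff_ssubset (cyclicAgents_subset _ _) ⟨y, mem_traders.mpr ⟨hy, hper⟩⟩

lemma TTCOn_of_notMem {S : Finset I} {i : I} (hi : i ∉ S) : TTCOn P S i = i := by
  induction S using strongInduction with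
  | H S ih =>
    have hiC : i ∉ traders P S := fun h => hi (cyclicAgents_subset _ _ h)
    rw [TTCOn, TTCaux]
    by_cases hC : (traders P S).Nonempty
    · rw [dif_pos hC, if_neg hiC]
      exact ih _ (sdiff_ssubset (cyclicAgents_subset _ _) hC) fun h => hi (mem_sdiff.mp h).1
    · rw [dif_neg hC]; rfl

lemma TTCOn_of_mem_periodicPts {S : Finset I} {i : I} (hi : i ∈ S)
    (hper : i ∈ periodicPts (pointing P S)) : TTCOn P S i = pointing P S i := by
  have hiC := mem_traders.mpr ⟨hi, hper⟩
  rw [TTCOn, TTCaux, dif_pos ⟨i, hiC⟩, if_pos hiC]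

lemma TTCOn_of_notMem_periodicPts {S : Finset I} {i : I}
    (hper : i ∉ periodicPts (pointing P S)) : TTCOn P S i = TTCOn P (S \ traders P S) i := by
  have hiC : i ∉ traders P S := fun h => hper (mem_traders.mp h).2
  by_cases hC : (traders P S).Nonempty
  · rw [TTCOn, TTCaux, dif_pos hC, if_neg hiC]; rfl
  · rw [not_nonempty_iff_eq_empty.mp hC, sdiff_empty]

lemma TTCOn_singleton (i : I) : TTCOn P {i} i = i := by
  have hfix : pointing P {i} i = i := mem_singleton.mp (mapsTo_pointing _ (mem_singleton_self i))
  rw [TTCOn_of_mem_periodicPts (mem_singleton_self i) (mk_mem_periodicPts one_pos hfix), hfix]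

lemma TTCOn_mem {S : Finset I} {i : I} (hi : i ∈ S) : TTCOn P S i ∈ S := by
  induction S using strongInduction generalizing i with
  | H S ih =>
    by_cases hper : i ∈ periodicPts (pointing P S)
    · rw [TTCOn_of_mem_periodicPts hi hper]; exact mapsTo_pointing S hi
    · rw [TTCOn_of_notMem_periodicPts hper]
      exact sdiff_subset (ih _ (sdiff_traders_ssubset ⟨i, hi⟩)
        (mem_sdiff.mpr ⟨hi, fun h => hper (mem_traders.mp h).2⟩))

lemma exists_TTCOn_eq {S : Finset I} {y : I} (hy : y ∈ S) : ∃ x, TTCOn P S x = y := by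
  induction S using strongInduction generalizing y with
  | H S ih =>
    by_cases hper : y ∈ periodicPts (pointing P S)
    · obtain ⟨x, hxper, hxy⟩ := (bijOn_periodicPts _).surjOn hper
      have hxS : x ∈ S :=
        mem_of_iterate_mem_of_mem_periodicPts (k := 1) (mapsTo_pointing S) hxper
          (show pointing P S x ∈ S from hxy ▸ hy)
      exact ⟨x, by rw [TTCOn_of_mem_periodicPts hxS hxper, hxy]⟩
    · have hyD : y ∈ S \ traders P S :=
        mem_sdiff.mpr ⟨hy, fun h => hper (mem_traders.mp h).2⟩
      obtain ⟨x, hx⟩ := ih _ (sdiff_traders_ssubset ⟨y, hy⟩) hyD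
      have hxD : x ∈ S \ traders P S := by
        by_contra h; rw [TTCOn_of_notMem h] at hx; exact h (hx ▸ hyD)
      refine ⟨x, ?_⟩
      rw [TTCOn_of_notMem_periodicPts fun h => (mem_sdiff.mp hxD).2
        (mem_traders.mpr ⟨(mem_sdiff.mp hxD).1, h⟩), hx]

variable (P) in
theorem TTC_bijective [Fintype I] : Bijective (TTC P) :=
  Finite.surjective_iff_bijective.mp fun y => exists_TTCOn_eq (mem_univ y)

lemma pointing_sdiff_iterate {S C : Finset I} (hC : Set.MapsTo (pointing P S) C C) {j : I}
    (hjS : j ∈ S) (hj : j ∈ periodicPts (pointing P S)) (hjC : j ∉ C) (l : ℕ) :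
    pointing P (S \ C) ((pointing P S)^[l] j) = pointing P S ((pointing P S)^[l] j) := by
  apply pointing_of_subset sdiff_subset
  rw [← iterate_succ_apply' (pointing P S)]
  exact mem_sdiff.mpr ⟨(mapsTo_pointing S).iterate _ hjS,
    fun h => hjC (mem_of_iterate_mem_of_mem_periodicPts hC hj h)⟩

lemma mem_periodicPts_pointing_sdiff {S C : Finset I} (hC : Set.MapsTo (pointing P S) C C)
    {j : I} (hjS : j ∈ S) (hj : j ∈ periodicPts (pointing P S)) (hjC : j ∉ C) :
    j ∈ periodicPts (pointing P (S \ C)) := by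
  obtain ⟨n, hn, hper⟩ := mem_periodicPts.mp hj
  exact mk_mem_periodicPts hn ((iterate_eq_of_forall_lt fun l _ =>
    pointing_sdiff_iterate hC hjS hj hjC l).trans hper.eq)

lemma TTCOn_eq_TTCOn_sdiff {S C : Finset I} (hCS : C ⊆ S) (hC : Set.MapsTo (pointing P S) C C)
    (hCper : ∀ j ∈ C, j ∈ periodicPts (pointing P S)) {i : I} (hi : i ∉ C) :
    TTCOn P S i = TTCOn P (S \ C) i := by
  induction S using strongInduction generalizing C with
  | H S ih =>
    by_cases hiS : i ∈ S
    swap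
    · rw [TTCOn_of_notMem hiS, TTCOn_of_notMem fun h => hiS (mem_sdiff.mp h).1]
    rcases C.eq_empty_or_nonempty with rfl | hCne
    · rw [sdiff_empty]
    set D := traders P S
    have hCD : C ⊆ D := fun j hj => mem_traders.mpr ⟨hCS hj, hCper j hj⟩
    -- the cycles of `D` outside `C` are still cycles once `C` has left
    have hDC : ∀ j ∈ D \ C, j ∈ S \ C ∧ pointing P (S \ C) j = pointing P S j ∧
        j ∈ periodicPts (pointing P (S \ C)) := by
      intro j hj
      obtain ⟨hjD, hjC⟩ := mem_sdiff.mp hj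
      obtain ⟨hjS, hjper⟩ := mem_traders.mp hjD
      exact ⟨mem_sdiff.mpr ⟨hjS, hjC⟩, pointing_sdiff_iterate hC hjS hjper hjC 0,
        mem_periodicPts_pointing_sdiff hC hjS hjper hjC⟩
    have hDCmaps : Set.MapsTo (pointing P (S \ C)) ↑(D \ C) ↑(D \ C) := by
      intro j hj
      rw [mem_coe] at hj
      obtain ⟨hjD, hjC⟩ := mem_sdiff.mp hj
      obtain ⟨hjS, hjper⟩ := mem_traders.mp hjD
      rw [mem_coe, (hDC j hj).2.1]
      exact mem_sdiff.mpr ⟨mem_traders.mpr ⟨mapsTo_pointing S hjS,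
        (bijOn_periodicPts _).mapsTo hjper⟩,
        fun h => hjC (mem_of_iterate_mem_of_mem_periodicPts (k := 1) hC hjper h)⟩
    have hrec := ih (S \ C) (sdiff_ssubset hCS hCne)
      (sdiff_subset_sdiff (cyclicAgents_subset _ _) le_rfl) hDCmaps fun j hj => (hDC j hj).2.2
    by_cases hper : i ∈ periodicPts (pointing P S)
    · obtain ⟨hiSC, hpt, hper'⟩ :=
        hDC i (mem_sdiff.mpr ⟨mem_traders.mpr ⟨hiS, hper⟩, hi⟩)
      rw [TTCOn_of_mem_periodicPts hiS hper, TTCOn_of_mem_periodicPts hiSC hper', hpt]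
    · have hiD : i ∉ D := fun h => hper (mem_traders.mp h).2
      rw [TTCOn_of_notMem_periodicPts hper, hrec fun h => hiD (mem_sdiff.mp h).1,
        sdiff_sdiff_sdiff_cancel_right hCD]

/-- The pointing path from `x` to `i` survives, with the same pointers, until `i` trades. -/
lemma le_TTCOn_of_iterate_eq {S : Finset I} {i x : I} (hi : i ∈ S) (hx : x ∈ S) {m : ℕ}
    (hm : (pointing P S)^[m] x = i) : (P i).le x (TTCOn P S i) := by
  induction S using strongInduction generalizing x m with
  | H S ih =>
    by_cases hper : i ∈ periodicPts (pointing P S)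
    · rw [TTCOn_of_mem_periodicPts hi hper]; exact le_favIn (P i) hx i
    have hpath : ∀ l ≤ m, (pointing P S)^[l] x ∈ S \ traders P S := by
      refine fun l hl => mem_sdiff.mpr ⟨(mapsTo_pointing S).iterate l hx, fun h => hper ?_⟩
      rw [← hm, ← Nat.sub_add_cancel hl, iterate_add_apply]
      exact (bijOn_periodicPts _).mapsTo.iterate _ (mem_traders.mp h).2
    have hagree : ∀ l < m, pointing P (S \ traders P S) ((pointing P S)^[l] x) =
        pointing P S ((pointing P S)^[l] x) := fun l hl =>
      pointing_of_subset sdiff_subset (by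
        rw [← iterate_succ_apply' (pointing P S)]; exact hpath _ hl)
    rw [TTCOn_of_notMem_periodicPts hper]
    exact ih _ (sdiff_traders_ssubset ⟨i, hi⟩) (hm ▸ hpath m le_rfl) (hpath 0 (Nat.zero_le _))
      ((iterate_eq_of_forall_lt hagree).trans hm)

lemma TTCOn_update_le {S : Finset I} {i : I} (q : LinearOrder I) (hi : i ∈ S) :
    (P i).le (TTCOn (update P i q) S i) (TTCOn P S i) := by
  induction S using strongInduction with
  | H S ih =>
    set g := pointing (update P i q) S
    have hgf : ∀ y ≠ i, g y = pointing P S y := fun y hy => pointing_update_of_ne q hy S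
    by_cases hf : i ∈ periodicPts (pointing P S)
    · rw [TTCOn_of_mem_periodicPts hi hf]; exact le_favIn (P i) (TTCOn_mem hi) i
    by_cases hg : i ∈ periodicPts g
    · -- the lie trades `i` to `g i`, from which the `g`-path back to `i` is also a truthful path
      rw [TTCOn_of_mem_periodicPts hi hg]
      have hex := exists_iterate_apply_eq_of_mem_periodicPts' hg
      refine le_TTCOn_of_iterate_eq hi (mapsTo_pointing S hi) (m := Nat.find hex) ?_
      rw [iterate_eq_of_forall_lt fun l hl => (hgf _ (Nat.find_min hex hl)).symm]
      exact Nat.find_spec hex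
    · -- no cycle passes through `i`, so both reports remove the same cycles
      have hD : traders (update P i q) S = traders P S := by
        ext j
        simp only [mem_traders, and_congr_right_iff]
        exact fun _ => ⟨fun h => mem_periodicPts_of_eq_off h hg fun y hy => (hgf y hy).symm,
          fun h => mem_periodicPts_of_eq_off h hf hgf⟩
      rw [TTCOn_of_notMem_periodicPts hf, TTCOn_of_notMem_periodicPts hg, hD]
      exact ih _ (sdiff_traders_ssubset ⟨i, hi⟩)
        (mem_sdiff.mpr ⟨hi, fun h => hf (mem_traders.mp h).2⟩)

variable [Fintype I]

theorem TTC_strategyProof (D : Set (LinearOrder I)) : StrategyProof D TTC :=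
  fun P _ i q _ hlt => @not_le_of_gt I (P i).toPreorder _ _ hlt (TTCOn_update_le q (mem_univ i))

theorem TTC_locallyUnanimous (D : Set (LinearOrder I)) : LocallyUnanimous D TTC := by
  intro P _ J _ μ hμJ hμ i hi
  have hfμ : ∀ j ∈ J, pointing P univ j = μ j := fun j hj => (hμ j hj).symm
  have hper : i ∈ periodicPts (pointing P univ) :=
    mem_periodicPts_of_injOn (s := (J : Set I)) (fun j hj => hfμ j hj ▸ hμJ.mapsTo hj)
      (fun a ha b hb h => hμJ.injOn ha hb (by rwa [← hfμ a ha, ← hfμ b hb])) hi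
  rw [TTC_eq_TTCOn_univ, TTCOn_of_mem_periodicPts (mem_univ i) hper, hfμ i hi]

lemma TTC_eq_TTCOn_of_topOf_eq_self (S : Finset I) (h : ∀ j ∉ S, topOf (P j) j = j) :
    TTC P = TTCOn P S := by
  have hfix : ∀ j ∈ Sᶜ, pointing P univ j = j := fun j hj => h j (mem_compl.mp hj)
  have hper : ∀ j ∈ Sᶜ, j ∈ periodicPts (pointing P univ) :=
    fun j hj => mk_mem_periodicPts one_pos (hfix j hj)
  funext i
  rw [TTC_eq_TTCOn_univ]
  by_cases hi : i ∈ S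
  · rw [TTCOn_eq_TTCOn_sdiff (subset_univ _) (fun j hj => (hfix j hj).symm ▸ hj) hper
      (notMem_compl.mpr hi), sdiff_compl, inf_eq_inter, univ_inter]
  · rw [TTCOn_of_mem_periodicPts (mem_univ i) (hper i (mem_compl.mpr hi)),
      hfix i (mem_compl.mpr hi), TTCOn_of_notMem hi]

end TTC

section Modification

/-- Replacing `φ P₀` by `π` gives agent `i` no incentive to misreport, neither away from `P₀`
nor onto `P₀`. -/
def DeviationProofAt (D : Set (LinearOrder I)) (φ : (I → LinearOrder I) → I → I)
    (P₀ : I → LinearOrder I) (π : I → I) (i : I) : Prop :=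
  ∀ p ∈ D, Function.update P₀ i p ≠ P₀ →
    ¬ (P₀ i).lt (π i) (φ (Function.update P₀ i p) i) ∧
      ¬ p.lt (φ (Function.update P₀ i p) i) (π i)

variable {D : Set (LinearOrder I)} {φ : (I → LinearOrder I) → I → I}
  {P₀ : I → LinearOrder I} {π : I → I}

omit [DecidableEq I] in
theorem LocallyUnanimous.update [Fintype I] [DecidableEq (I → LinearOrder I)]
    (hφ : LocallyUnanimous D φ)
    (hπ : ∀ J : Finset I, J.Nonempty → ∀ μ : I → I, Set.BijOn μ ↑J ↑J →
      (∀ i ∈ J, μ i = topOf (P₀ i) i) → ∀ i ∈ J, π i = μ i) :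
    LocallyUnanimous D (update φ P₀ π) := by
  intro P hP J hJ μ hμJ hμ
  by_cases h : P = P₀
  · subst h; rw [update_self]; exact hπ J hJ μ hμJ hμ
  · rw [update_of_ne h]; exact hφ P hP J hJ μ hμJ hμ

theorem StrategyProof.update [DecidableEq (I → LinearOrder I)] (hφ : StrategyProof D φ)
    (hπ : ∀ i, DeviationProofAt D φ P₀ π i) :
    StrategyProof D (Function.update φ P₀ π) := by
  intro P hP i q hq
  by_cases h₀ : P = P₀
  · subst h₀
    by_cases h : Function.update P i q = P
    · rw [h]; exact @lt_irrefl I (P i).toPreorder _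
    · rw [Function.update_self, Function.update_of_ne h]; exact (hπ i q hq h).1
  · by_cases h : Function.update P i q = P₀
    · have hPeq : Function.update P₀ i (P i) = P := by
        rw [← h, Function.update_idem, Function.update_eq_self]
      rw [Function.update_of_ne h₀, h, Function.update_self]
      simpa only [hPeq] using (hπ i (P i) (hP i) (by rwa [hPeq])).2
    · rw [Function.update_of_ne h₀, Function.update_of_ne h]; exact hφ P hP i q hq

lemma StrategyProof.deviationProofAt (hφ : StrategyProof D φ) (hP₀ : ∀ j, P₀ j ∈ D)
    {i : I} (hi : π i = φ P₀ i) : DeviationProofAt D φ P₀ π i := by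
  intro p hp _
  rw [hi]
  refine ⟨hφ P₀ hP₀ i p hp, ?_⟩
  have hD : ∀ j, Function.update P₀ i p j ∈ D := fun j => by
    rcases eq_or_ne j i with rfl | h
    · rwa [Function.update_self]
    · rw [Function.update_of_ne h]; exact hP₀ j
  have h := hφ (Function.update P₀ i p) hD i (P₀ i) (hP₀ i)
  rwa [Function.update_self, Function.update_idem, Function.update_eq_self] at h

end Modification

section RightFirst

variable {n : ℕ}

/-- Objects at or right of `k` rank above those left of it; on each side, the closer to `k`
the better. -/
def rightFirstRank (k j : Fin n) : ℕ := if k ≤ j then 2 * n - j else j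

lemma rightFirstRank_injective (k : Fin n) : Injective (rightFirstRank k) := by
  intro a b hab
  have := a.isLt; have := b.isLt
  simp only [rightFirstRank, Fin.le_def] at hab
  ext; split_ifs at hab <;> omega

abbrev rightFirst (k : Fin n) : LinearOrder (Fin n) :=
  LinearOrder.lift' (rightFirstRank k) (rightFirstRank_injective k)

lemma rightFirst_lt {k a b : Fin n} :
    (rightFirst k).lt a b ↔ rightFirstRank k a < rightFirstRank k b := Iff.rfl

lemma rightFirst_le {k a b : Fin n} :
    (rightFirst k).le a b ↔ rightFirstRank k a ≤ rightFirstRank k b := Iff.rfl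

lemma singlePeaked_rightFirst (k : Fin n) : SinglePeaked (rightFirst k) := by
  refine ⟨k, fun o ho => ?_, fun o o' _ _ hoo' h => ?_⟩ <;>
    simp only [rightFirst_lt, rightFirstRank, Fin.le_def, Fin.lt_def, ne_eq, Fin.ext_iff] at * <;>
    have := o.isLt <;> split_ifs <;> omega

lemma favIn_rightFirst {k x : Fin n} {S : Finset (Fin n)} (hx : x ∈ S) (hkx : k ≤ x)
    (hmin : ∀ y ∈ S, k ≤ y → x ≤ y) (d : Fin n) : favIn (rightFirst k) S d = x := by
  refine favIn_eq_of_forall_le _ hx (fun y hy => ?_) d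
  have := hmin y hy
  have := y.isLt
  simp only [rightFirst_le, rightFirstRank, Fin.le_def] at *
  split_ifs <;> omega

lemma favIn_rightFirst_of_mem {k : Fin n} {S : Finset (Fin n)} (hk : k ∈ S) (d : Fin n) :
    favIn (rightFirst k) S d = k :=
  favIn_rightFirst hk le_rfl (fun _ _ h => h) d

lemma topOf_rightFirst (k d : Fin n) : topOf (rightFirst k) d = k :=
  favIn_rightFirst_of_mem (mem_univ k) d

lemma SinglePeaked.lt_zero_one {q : LinearOrder (Fin (n + 2))} (hq : SinglePeaked q)
    (hne : q ≠ rightFirst 0) : q.lt 0 1 := by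
  obtain ⟨pk, hpk, hside⟩ := hq
  by_contra h01
  have hpk0 : pk = 0 := by
    by_contra hpk0
    rcases eq_or_ne pk 1 with rfl | hpk1
    · exact h01 (hpk 0 (Ne.symm hpk0))
    · refine h01 (hside 0 1 (Ne.symm hpk0) (Ne.symm hpk1) (by simp) (Or.inl ⟨by simp, ?_⟩))
      simp only [Fin.lt_def, Fin.val_one, ne_eq, Fin.ext_iff, Fin.val_zero] at hpk0 hpk1 ⊢
      omega
  subst hpk0
  have hdesc : ∀ a b : Fin (n + 2), b < a → q.lt a b := by
    intro a b hba
    rcases eq_or_ne b 0 with rfl | hb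
    · exact hpk a (ne_of_gt hba)
    · exact hside a b (ne_of_gt (lt_of_le_of_lt (Fin.zero_le b) hba)) hb (ne_of_gt hba)
        (Or.inr ⟨lt_of_le_of_ne (Fin.zero_le b) (Ne.symm hb), hba⟩)
  refine hne (LinearOrder.ext_lt fun a b => ?_)
  change q.lt a b ↔ rightFirstRank 0 a < rightFirstRank 0 b
  have hrank : rightFirstRank 0 a < rightFirstRank 0 b ↔ b < a := by
    have := a.isLt; have := b.isLt
    simp only [rightFirstRank, Fin.zero_le, if_true, Fin.lt_def]
    omega
  rw [hrank]
  refine ⟨fun hab => ?_, hdesc a b⟩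
  -- `q` is a local instance here, so compare the underlying naturals
  rcases lt_trichotomy a.val b.val with h | h | h
  · exact absurd hab (@lt_asymm _ q.toPreorder _ _ (hdesc b a (Fin.lt_def.mpr h)))
  · exact absurd hab (Fin.ext h ▸ @lt_irrefl _ q.toPreorder a)
  · exact Fin.lt_def.mpr h

end RightFirst

section Counterexample

variable {m : ℕ}

@[simp] lemma two_mod_add_four : 2 % (m + 4) = 2 := Nat.mod_eq_of_lt (by omega)

@[simp] lemma three_mod_add_four : 3 % (m + 4) = 3 := Nat.mod_eq_of_lt (by omega)

def peakStar (j : Fin (m + 4)) : Fin (m + 4) :=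
  if j = 0 then 2 else if j = 1 ∨ j = 3 then 0 else j

abbrev Pstar (j : Fin (m + 4)) : LinearOrder (Fin (m + 4)) := rightFirst (peakStar j)

def core : Finset (Fin (m + 4)) := {0, 1, 3}

noncomputable def psi :
    (Fin (m + 4) → LinearOrder (Fin (m + 4))) → Fin (m + 4) → Fin (m + 4) :=
  open Classical in update TTC Pstar (TTC Pstar ∘ Equiv.swap 1 3)

lemma singlePeaked_Pstar (j : Fin (m + 4)) : SinglePeaked (Pstar j) :=
  singlePeaked_rightFirst _

lemma Pstar_zero : Pstar (0 : Fin (m + 4)) = rightFirst 2 := by simp [Pstar, peakStar]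

lemma Pstar_one : Pstar (1 : Fin (m + 4)) = rightFirst 0 := by simp [Pstar, peakStar]

lemma Pstar_three : Pstar (3 : Fin (m + 4)) = rightFirst 0 := by
  simp [Pstar, peakStar, Fin.ext_iff]

lemma Pstar_of_notMem_core {j : Fin (m + 4)} (hj : j ∉ core) : Pstar j = rightFirst j := by
  simp only [core, mem_insert, mem_singleton, not_or] at hj
  simp [Pstar, peakStar, hj.1, hj.2.1, hj.2.2]

lemma update_Pstar_of_notMem_core {i : Fin (m + 4)} (hi : i ∈ core)
    (p : LinearOrder (Fin (m + 4))) : ∀ j ∉ core, update Pstar i p j = Pstar j :=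
  fun j hj => update_of_ne (by rintro rfl; exact hj hi) _ _

lemma favIn_rightFirst_two_core (d : Fin (m + 4)) : favIn (rightFirst 2) core d = 3 :=
  favIn_rightFirst (by simp [core]) (by simp [Fin.le_def]) (by
    simp only [core, mem_insert, mem_singleton, Fin.le_def]
    rintro y (rfl | rfl | rfl) <;> simp) d

lemma favIn_rightFirst_three_core (d : Fin (m + 4)) : favIn (rightFirst 3) core d = 3 :=
  favIn_rightFirst_of_mem (by simp [core]) d

lemma favIn_rightFirst_zero_core (d : Fin (m + 4)) : favIn (rightFirst 0) core d = 0 :=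
  favIn_rightFirst_of_mem (by simp [core]) d

lemma TTC_eq_TTCOn_core {R : Fin (m + 4) → LinearOrder (Fin (m + 4))}
    (hR : ∀ j ∉ core, R j = Pstar j) : TTC R = TTCOn R core :=
  TTC_eq_TTCOn_of_topOf_eq_self core fun j hj => by
    rw [hR j hj, Pstar_of_notMem_core hj, topOf_rightFirst]

lemma TTC_of_pointing_core_swap {R : Fin (m + 4) → LinearOrder (Fin (m + 4))}
    (hR : ∀ j ∉ core, R j = Pstar j) (h0 : pointing R core 0 = 3) (h3 : pointing R core 3 = 0) :
    TTC R 0 = 3 ∧ TTC R 3 = 0 ∧ TTC R 1 = 1 := by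
  set pair : Finset (Fin (m + 4)) := {0, 3}
  have hper : ∀ j ∈ pair, j ∈ periodicPts (pointing R core) := by
    simp only [pair, mem_insert, mem_singleton]
    rintro j (rfl | rfl)
    · exact mem_periodicPts_of_apply_eq_of_apply_eq h0 h3
    · exact mem_periodicPts_of_apply_eq_of_apply_eq h3 h0
  have hmaps : Set.MapsTo (pointing R core) pair pair := by
    simp only [pair, coe_insert, coe_singleton]
    rintro j (rfl | rfl) <;> simp [h0, h3]
  have hsub : pair ⊆ core := by simp [pair, core, insert_subset_iff]
  have hrest : core \ pair = {1} := by
    ext j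
    simp only [pair, core, mem_sdiff, mem_insert, mem_singleton]
    constructor
    · rintro ⟨rfl | rfl | rfl, h⟩ <;> simp_all
    · rintro rfl; simp [Fin.ext_iff]
  rw [TTC_eq_TTCOn_core hR]
  refine ⟨?_, ?_, ?_⟩
  · rw [TTCOn_of_mem_periodicPts (hsub (by simp [pair])) (hper 0 (by simp [pair])), h0]
  · rw [TTCOn_of_mem_periodicPts (hsub (by simp [pair])) (hper 3 (by simp [pair])), h3]
  · rw [TTCOn_eq_TTCOn_sdiff hsub hmaps hper (by simp [pair, Fin.ext_iff]), hrest,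
      TTCOn_singleton]

lemma TTC_three_of_pointing_core {R : Fin (m + 4) → LinearOrder (Fin (m + 4))}
    (hR : ∀ j ∉ core, R j = Pstar j) (h0 : pointing R core 0 = 3) (h1 : pointing R core 1 = 0) :
    TTC R 3 = pointing R core 3 := by
  have h3 : pointing R core 3 ∈ core := mapsTo_pointing core (by simp [core])
  simp only [core, mem_insert, mem_singleton] at h3
  rw [TTC_eq_TTCOn_core hR, TTCOn_of_mem_periodicPts (by simp [core])
    (mem_periodicPts_of_apply_eq_of_apply_eq_of_apply_mem h0 h1 (by tauto))]

lemma TTC_Pstar : TTC Pstar (0 : Fin (m + 4)) = 3 ∧ TTC Pstar (3 : Fin (m + 4)) = 0 ∧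
    TTC Pstar (1 : Fin (m + 4)) = 1 :=
  TTC_of_pointing_core_swap (fun _ _ => rfl)
    (by rw [pointing, Pstar_zero, favIn_rightFirst_two_core])
    (by rw [pointing, Pstar_three, favIn_rightFirst_zero_core])

lemma TTC_update_Pstar_one (p : LinearOrder (Fin (m + 4))) : TTC (update Pstar 1 p) 1 = 1 :=
  (TTC_of_pointing_core_swap (update_Pstar_of_notMem_core (i := 1) (by simp [core]) p)
    (by rw [pointing, update_of_ne (by simp), Pstar_zero, favIn_rightFirst_two_core])
    (by rw [pointing, update_of_ne (by simp [Fin.ext_iff]), Pstar_three,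
      favIn_rightFirst_zero_core])).2.2

lemma TTC_update_Pstar_three (p : LinearOrder (Fin (m + 4))) :
    TTC (update Pstar 3 p) 3 = favIn p core 3 := by
  rw [TTC_three_of_pointing_core (update_Pstar_of_notMem_core (i := 3) (by simp [core]) p)
    (by rw [pointing, update_of_ne (by simp [Fin.ext_iff]), Pstar_zero,
      favIn_rightFirst_two_core])
    (by rw [pointing, update_of_ne (by simp [Fin.ext_iff]), Pstar_one,
      favIn_rightFirst_zero_core]),
    pointing, update_self]

lemma TTC_update_Pstar_zero :
    TTC (update Pstar 0 (rightFirst 3)) (0 : Fin (m + 4)) = 3 ∧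
      TTC (update Pstar 0 (rightFirst 3)) (1 : Fin (m + 4)) = 1 := by
  obtain ⟨h0, -, h1⟩ := TTC_of_pointing_core_swap
    (update_Pstar_of_notMem_core (i := (0 : Fin (m + 4))) (by simp [core]) (rightFirst 3))
    (by rw [pointing, update_self, favIn_rightFirst_three_core])
    (by rw [pointing, update_of_ne (by simp [Fin.ext_iff]), Pstar_three,
      favIn_rightFirst_zero_core])
  exact ⟨h0, h1⟩

lemma psi_Pstar : psi Pstar = TTC Pstar ∘ Equiv.swap (1 : Fin (m + 4)) 3 := by
  classical exact update_self _ _ _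

lemma psi_of_ne {P : Fin (m + 4) → LinearOrder (Fin (m + 4))} (h : P ≠ Pstar) :
    psi P = TTC P := by
  classical exact update_of_ne h _ _

theorem psi_bijective (P : Fin (m + 4) → LinearOrder (Fin (m + 4))) : Bijective (psi P) := by
  by_cases h : P = Pstar
  · rw [h, psi_Pstar]; exact (TTC_bijective _).comp (Equiv.swap _ _).bijective
  · rw [psi_of_ne h]; exact TTC_bijective P

theorem psi_locallyUnanimous : LocallyUnanimous {p | SinglePeaked p} (psi (m := m)) := by
  classical
  refine (TTC_locallyUnanimous _).update fun J hJ μ hμJ hμ i hi => ?_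
  have htop : ∀ j : Fin (m + 4), topOf (Pstar j) j = peakStar j := fun j => topOf_rightFirst _ _
  -- agent `0` wants `2`, who wants to keep it
  have h0 : (0 : Fin (m + 4)) ∉ J := by
    intro h0
    have h02 : μ 0 = 2 := by rw [hμ 0 h0, htop]; simp [peakStar]
    have h2 : (2 : Fin (m + 4)) ∈ J := h02 ▸ hμJ.mapsTo h0
    have h22 : μ 2 = 2 := by rw [hμ 2 h2, htop]; simp [peakStar, Fin.ext_iff]
    exact (by simp [Fin.ext_iff] : (0 : Fin (m + 4)) ≠ 2) (hμJ.injOn h0 h2 (h02.trans h22.symm))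
  have hwant0 : ∀ j, peakStar j = 0 → j ∉ J := fun j hj hjJ =>
    h0 (by simpa [hμ j hjJ, htop, hj] using hμJ.mapsTo hjJ)
  have h1 : (1 : Fin (m + 4)) ∉ J := hwant0 1 (by simp [peakStar])
  have h3 : (3 : Fin (m + 4)) ∉ J := hwant0 3 (by simp [peakStar, Fin.ext_iff])
  rw [comp_apply, Equiv.swap_apply_of_ne_of_ne (ne_of_mem_of_not_mem hi h1)
    (ne_of_mem_of_not_mem hi h3)]
  exact TTC_locallyUnanimous {p | SinglePeaked p} Pstar (fun j => singlePeaked_Pstar j)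
    J hJ μ hμJ hμ i hi

lemma deviationProofAt_Pstar_one :
    DeviationProofAt {p | SinglePeaked p} TTC Pstar (TTC Pstar ∘ Equiv.swap 1 3)
      (1 : Fin (m + 4)) := by
  intro p hp hne
  have hp0 : p ≠ rightFirst 0 := fun h => hne (by rw [h, ← Pstar_one, update_eq_self])
  rw [comp_apply, Equiv.swap_apply_left, TTC_Pstar.2.1, TTC_update_Pstar_one, Pstar_one]
  refine ⟨fun h => ?_, @lt_asymm _ p.toPreorder _ _ (SinglePeaked.lt_zero_one hp hp0)⟩
  simp [rightFirst_lt, rightFirstRank] at h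
  omega

lemma deviationProofAt_Pstar_three :
    DeviationProofAt {p | SinglePeaked p} TTC Pstar (TTC Pstar ∘ Equiv.swap 1 3)
      (3 : Fin (m + 4)) := by
  intro p hp hne
  have hp0 : p ≠ rightFirst 0 := fun h => hne (by rw [h, ← Pstar_three, update_eq_self])
  rw [comp_apply, Equiv.swap_apply_right, TTC_Pstar.2.2, TTC_update_Pstar_three, Pstar_three]
  have h1x : p.le 1 (favIn p core 3) := le_favIn p (by simp [core]) 3
  have hx0 : favIn p core 3 ≠ 0 := fun h =>
    @not_le_of_gt _ p.toPreorder _ _ (SinglePeaked.lt_zero_one hp hp0) (h ▸ h1x)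
  refine ⟨fun h => hx0 ?_, @not_lt_of_ge _ p.toPreorder _ _ h1x⟩
  have := (favIn p core 3).isLt
  simp only [rightFirst_lt, rightFirstRank, Fin.zero_le, if_true, Fin.val_one] at h
  ext; simp only [Fin.val_zero]; omega

theorem psi_strategyProof : StrategyProof {p | SinglePeaked p} (psi (m := m)) := by
  classical
  refine (TTC_strategyProof _).update fun i => ?_
  rcases eq_or_ne i 1 with rfl | h1
  · exact deviationProofAt_Pstar_one
  rcases eq_or_ne i 3 with rfl | h3
  · exact deviationProofAt_Pstar_three
  exact (TTC_strategyProof _).deviationProofAt (fun j => singlePeaked_Pstar j)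
    (by rw [comp_apply, Equiv.swap_apply_of_ne_of_ne h1 h3])

/-- Agent `0` reporting `rightFirst 2` instead of his true `rightFirst 3` still gets `3` and
turns the profile into `Pstar`, where agent `1` gets `0` instead of his endowment. -/
theorem psi_not_groupStrategyProof :
    ¬ GroupStrategyProof {p | SinglePeaked p} (psi (m := m)) := by
  set P := update Pstar (0 : Fin (m + 4)) (rightFirst 3) with hPdef
  have hP : ∀ j, SinglePeaked (P j) := by
    intro j
    rcases eq_or_ne j 0 with rfl | hj
    · rw [hPdef, update_self]; exact singlePeaked_rightFirst 3
    · rw [hPdef, update_of_ne hj]; exact singlePeaked_Pstar j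
  have hne : P ≠ Pstar := fun h => by
    have := congrArg (topOf · 0) (congrFun h 0)
    simp only [P, update_self, Pstar_zero, topOf_rightFirst] at this
    simp [Fin.ext_iff] at this
  obtain ⟨h0, h1⟩ := TTC_update_Pstar_zero (m := m)
  refine fun h => h P Pstar hP (fun j => singlePeaked_Pstar j) {0, 1} (by simp)
    (fun j hj => ?_) ⟨fun i hi => ?_, 1, by simp, ?_⟩
  · simp only [mem_insert, mem_singleton, not_or] at hj
    exact (update_of_ne hj.1 _ _).symm
  · simp only [mem_insert, mem_singleton] at hi
    rw [psi_of_ne hne, psi_Pstar, comp_apply]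
    rcases hi with rfl | rfl
    · rw [Equiv.swap_apply_of_ne_of_ne (by simp) (by simp [Fin.ext_iff]), h0, TTC_Pstar.1]
      exact @le_refl _ (P 0).toPreorder _
    · rw [Equiv.swap_apply_left, h1, TTC_Pstar.2.1, hPdef, update_of_ne one_ne_zero, Pstar_one]
      simp [rightFirst_le, rightFirstRank]
  · rw [psi_of_ne hne, psi_Pstar, comp_apply, Equiv.swap_apply_left, h1, TTC_Pstar.2.1, hPdef,
      update_of_ne one_ne_zero, Pstar_one]
    simp [rightFirst_lt, rightFirstRank]

theorem psi_Pstar_ne_TTC :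
    psi Pstar ≠ TTC (Pstar : Fin (m + 4) → LinearOrder (Fin (m + 4))) := by
  intro h
  have h3 := congrFun h 3
  rw [psi_Pstar, comp_apply, Equiv.swap_apply_right, TTC_Pstar.2.2, TTC_Pstar.2.1] at h3
  simp at h3

end Counterexample

/-- For every `n ≥ 4`, on the single-peaked preference domain
(with respect to `o_1 ▷ o_2 ▷ ⋯ ▷ o_n`) there exists a mechanism that is
locally unanimous and strategy-proof but is not group strategy-proof and
differs from the TTC mechanism. -/
theorem stmt_13 (n : ℕ) (hn : 4 ≤ n) :
    ∃ ψ : (Fin n → LinearOrder (Fin n)) → Fin n → Fin n,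
      (∀ P : Fin n → LinearOrder (Fin n), (∀ i, SinglePeaked (P i)) →
        Function.Bijective (ψ P)) ∧
      LocallyUnanimous {p | SinglePeaked p} ψ ∧
      StrategyProof {p | SinglePeaked p} ψ ∧
      ¬ GroupStrategyProof {p | SinglePeaked p} ψ ∧
      ∃ P : Fin n → LinearOrder (Fin n), (∀ i, SinglePeaked (P i)) ∧ ψ P ≠ TTC P := by
  obtain ⟨m, rfl⟩ : ∃ m, n = m + 4 := ⟨n - 4, by omega⟩
  exact ⟨psi, fun P _ => psi_bijective P, psi_locallyUnanimous, psi_strategyProof,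
    psi_not_groupStrategyProof, Pstar, singlePeaked_Pstar, psi_Pstar_ne_TTC⟩
end

section
/- For every n ≥ 3, on the single-dipped preference domain (with respect to the order o_1 ▷ o_2 ▷ ⋯ ▷ o_n) there exists a mechanism that is locally unanimous and group strategy-proof but differs from the TTC mechanism. -/
/- Housing market model (Shapley–Scarf). Agents and objects are identified:
the type `I` is the (finite) set of agents, and object `i` (the endowment of
agent `i`) is identified with `i` itself. A strict preference is a linear
order on `I` (viewed as the set of objects); a preference domain is a set of
linear orders; a mechanism maps preference profiles to assignments `I → I`
(an allocation being a bijective assignment). -/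

open Finset

variable {I : Type*} [DecidableEq I]

/-- `p` is single-dipped with respect to the order `o_1 ▷ o_2 ▷ ⋯ ▷ o_n` of the
objects (encoded as the natural order on `Fin n`, where `a ▷ b` iff `a < b`). -/
def SingleDipped {n : ℕ} (p : LinearOrder (Fin n)) : Prop :=
  ∃ dip : Fin n, (∀ o : Fin n, o ≠ dip → p.lt dip o) ∧
    ∀ o o' : Fin n, o ≠ dip → o' ≠ dip → o ≠ o' →
      ((o < o' ∧ o' < dip) ∨ (dip < o' ∧ o' < o)) → p.lt o' o


/-! ### Auxiliary material for the proof of `stmt_14` -/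

section Stmt14Aux

variable {α : Type*}

lemma LO.nlt (p : LinearOrder α) {a b : α} (h1 : p.lt a b) (h2 : p.le b a) : False := by
  letI := p
  exact lt_irrefl a (lt_of_lt_of_le h1 h2)

lemma LO.irr (p : LinearOrder α) {a : α} (h1 : p.lt a a) : False := by
  letI := p; exact lt_irrefl a h1

lemma LO.anti (p : LinearOrder α) {a b : α} (h1 : p.le a b) (h2 : p.le b a) : a = b := by
  letI := p; exact le_antisymm h1 h2

lemma max'_eq_of (p : LinearOrder α) (S : Finset α) (h : S.Nonempty) (b : α) (hb : b ∈ S)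
    (hmax : ∀ x ∈ S, p.le x b) : @Finset.max' α p S h = b := by
  letI := p
  exact le_antisymm (Finset.max'_le S h b hmax) (Finset.le_max' S b hb)

lemma favIn_eq_of (p : LinearOrder α) (S : Finset α) (d b : α) (hb : b ∈ S)
    (hmax : ∀ x ∈ S, p.le x b) : favIn p S d = b := by
  have h : S.Nonempty := ⟨b, hb⟩
  rw [favIn, dif_pos h]
  exact max'_eq_of p S h b hb hmax

lemma le_topOf [DecidableEq α] [Fintype α] [Nonempty α] (p : LinearOrder α) (d o : α) :
    p.le o (topOf p d) := by
  have h : (Finset.univ : Finset α).Nonempty := Finset.univ_nonempty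
  rw [topOf, favIn, dif_pos h]
  exact @Finset.le_max' α p _ o (Finset.mem_univ o)

/-- The "agent-1" preference `0 ≻ n-1 ≻ ⋯ ≻ 2 ≻ 1`, encoded by a utility function. -/
def fB (n : ℕ) (x : Fin n) : ℕ := if x.val = 0 then n else x.val

lemma fB_eval {n : ℕ} (x : Fin n) : fB n x = if x.val = 0 then n else x.val := rfl

lemma fB_inj (n : ℕ) : Function.Injective (fB n) := by
  intro x y h
  have hx := x.isLt; have hy := y.isLt
  unfold fB at h
  apply Fin.ext
  split at h <;> split at h <;> omega

def pB (n : ℕ) : LinearOrder (Fin n) := LinearOrder.lift' (fB n) (fB_inj n)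

def pA (n : ℕ) : LinearOrder (Fin n) := inferInstance

lemma pB_le {n : ℕ} {x y : Fin n} : (pB n).le x y ↔ fB n x ≤ fB n y := Iff.rfl
lemma pB_lt {n : ℕ} {x y : Fin n} : (pB n).lt x y ↔ fB n x < fB n y := Iff.rfl
lemma pA_le {n : ℕ} {x y : Fin n} : (pA n).le x y ↔ x ≤ y := Iff.rfl
lemma pA_lt {n : ℕ} {x y : Fin n} : (pA n).lt x y ↔ x < y := Iff.rfl

/-- Object/agent `0`. -/
def zF (n : ℕ) (hn : 3 ≤ n) : Fin n := ⟨0, by omega⟩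
/-- Object/agent `1`. -/
def oF (n : ℕ) (hn : 3 ≤ n) : Fin n := ⟨1, by omega⟩
/-- Object/agent `n-1`. -/
def LF (n : ℕ) (hn : 3 ≤ n) : Fin n := ⟨n - 1, by omega⟩

lemma zF_val (n : ℕ) (hn : 3 ≤ n) : (zF n hn).val = 0 := rfl
lemma oF_val (n : ℕ) (hn : 3 ≤ n) : (oF n hn).val = 1 := rfl
lemma LF_val (n : ℕ) (hn : 3 ≤ n) : (LF n hn).val = n - 1 := rfl

lemma zF_ne_LF (n : ℕ) (hn : 3 ≤ n) : zF n hn ≠ LF n hn := by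
  intro h
  have := congrArg Fin.val h
  rw [zF_val, LF_val] at this
  omega

lemma zF_ne_oF (n : ℕ) (hn : 3 ≤ n) : zF n hn ≠ oF n hn := by
  intro h
  have := congrArg Fin.val h
  rw [zF_val, oF_val] at this
  omega

lemma sd_pA (n : ℕ) (hn : 3 ≤ n) : SingleDipped (pA n) := by
  refine ⟨zF n hn, ?_, ?_⟩
  · intro o ho
    have ho' : o.val ≠ 0 := fun h => ho (Fin.ext (by rw [h, zF_val]))
    rw [pA_lt, Fin.lt_def, zF_val]
    omega
  · rintro o o' ho ho' hoo' (⟨h1, h2⟩ | ⟨h1, h2⟩)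
    · rw [Fin.lt_def, zF_val] at h2
      omega
    · rw [pA_lt]; exact h2

lemma sd_pB (n : ℕ) (hn : 3 ≤ n) : SingleDipped (pB n) := by
  refine ⟨oF n hn, ?_, ?_⟩
  · intro o ho
    have hol := o.isLt
    have ho' : o.val ≠ 1 := fun h => ho (Fin.ext (by rw [h, oF_val]))
    rw [pB_lt, fB_eval, fB_eval, oF_val]
    rw [if_neg (by omega : ¬ (1:ℕ) = 0)]
    split <;> omega
  · rintro o o' ho ho' hoo' (⟨h1, h2⟩ | ⟨h1, h2⟩)
    · rw [Fin.lt_def] at h1 h2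
      rw [oF_val] at h2
      omega
    · rw [Fin.lt_def] at h1 h2
      rw [oF_val] at h1
      have ho2 : o.val ≠ 0 := by omega
      have ho'2 : o'.val ≠ 0 := by omega
      rw [pB_lt, fB_eval, fB_eval, if_neg ho2, if_neg ho'2]
      omega

lemma top_pA (n : ℕ) (hn : 3 ≤ n) (d : Fin n) : topOf (pA n) d = LF n hn := by
  rw [topOf]
  apply favIn_eq_of
  · exact Finset.mem_univ _
  · intro x _
    have := x.isLt
    rw [pA_le, Fin.le_def, LF_val]
    omega

lemma top_pB (n : ℕ) (hn : 3 ≤ n) (d : Fin n) : topOf (pB n) d = zF n hn := by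
  rw [topOf]
  apply favIn_eq_of
  · exact Finset.mem_univ _
  · intro x _
    have := x.isLt
    rw [pB_le, fB_eval, fB_eval, zF_val, if_pos rfl]
    split <;> omega

/-- For single-dipped preferences, the top object is one of the two endpoints. -/
lemma top_cases (n : ℕ) (hn : 3 ≤ n) (p : LinearOrder (Fin n)) (hp : SingleDipped p)
    (d : Fin n) : topOf p d = zF n hn ∨ topOf p d = LF n hn := by
  haveI : Nonempty (Fin n) := ⟨⟨0, by omega⟩⟩
  by_contra h
  push_neg at h
  obtain ⟨hz, hL⟩ := h
  set t := topOf p d with ht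
  have htop : ∀ o, p.le o t := le_topOf p d
  have htlt := t.isLt
  have htv0 : t.val ≠ 0 := fun h' => hz (Fin.ext (by rw [h', zF_val]))
  have htvL : t.val ≠ n - 1 := fun h' => hL (Fin.ext (by rw [h', LF_val]))
  obtain ⟨dip, h1, h2⟩ := hp
  by_cases hd : t = dip
  · have hzd : zF n hn ≠ dip := by rw [← hd]; exact fun h' => hz h'.symm
    exact LO.nlt p (hd ▸ h1 (zF n hn) hzd) (htop (zF n hn))
  · rcases lt_trichotomy t.val dip.val with hlt | heq | hgt
    · have hzdip : zF n hn ≠ dip := by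
        intro h'
        have := congrArg Fin.val h'
        rw [zF_val] at this
        omega
      have hzt : zF n hn ≠ t := fun h' => hz h'.symm
      have := h2 (zF n hn) t hzdip hd hzt
        (Or.inl ⟨by rw [Fin.lt_def, zF_val]; omega, by rw [Fin.lt_def]; exact hlt⟩)
      exact LO.nlt p this (htop _)
    · exact hd (Fin.ext heq)
    · have hLdip : LF n hn ≠ dip := by
        intro h'
        have := congrArg Fin.val h'
        rw [LF_val] at this
        omega
      have hLt : LF n hn ≠ t := fun h' => hL h'.symm
      have := h2 (LF n hn) t hLdip hd hLt
        (Or.inr ⟨by rw [Fin.lt_def]; exact hgt, by rw [Fin.lt_def, LF_val]; omega⟩)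
      exact LO.nlt p this (htop _)

/-- The mechanism: agents `0` and `n-1` swap when each one's top is the other's
endowment; everyone else keeps his endowment. -/
def mech (n : ℕ) (hn : 3 ≤ n) (P : Fin n → LinearOrder (Fin n)) : Fin n → Fin n :=
  if topOf (P (zF n hn)) (zF n hn) = LF n hn ∧ topOf (P (LF n hn)) (LF n hn) = zF n hn
  then Equiv.swap (zF n hn) (LF n hn) else id

lemma mech_LU (n : ℕ) (hn : 3 ≤ n) : LocallyUnanimous {p | SingleDipped p} (mech n hn) := by
  intro P hP J hJne μ hbij hμ i hiJ
  have hzL := zF_ne_LF n hn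
  have hJor : ∀ j ∈ J, j = zF n hn ∨ j = LF n hn := by
    intro j hj
    obtain ⟨x, hx, hxe⟩ := hbij.2.2 (Finset.mem_coe.mpr hj)
    have hx' : x ∈ J := Finset.mem_coe.mp hx
    rw [hμ x hx'] at hxe
    rcases top_cases n hn (P x) (hP x) x with h | h <;> rw [h] at hxe
    · exact Or.inl hxe.symm
    · exact Or.inr hxe.symm
  rcases hJor i hiJ with rfl | rfl
  · have hμz : μ (zF n hn) = topOf (P (zF n hn)) (zF n hn) := hμ _ hiJ
    rcases top_cases n hn (P (zF n hn)) (hP _) (zF n hn) with h | h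
    · rw [h] at hμz
      unfold mech
      rw [if_neg (fun hc => hzL (h.symm.trans hc.1))]
      rw [hμz]
      rfl
    · rw [h] at hμz
      have hLJ : LF n hn ∈ J := by
        have := hbij.1 (Finset.mem_coe.mpr hiJ)
        rw [hμz] at this
        exact Finset.mem_coe.mp this
      have hμL : μ (LF n hn) = topOf (P (LF n hn)) (LF n hn) := hμ _ hLJ
      rcases top_cases n hn (P (LF n hn)) (hP _) (LF n hn) with h' | h'
      · unfold mech
        rw [if_pos ⟨h, h'⟩, hμz]
        exact Equiv.swap_apply_left _ _
      · exfalso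
        rw [h'] at hμL
        exact hzL (hbij.2.1 (Finset.mem_coe.mpr hiJ) (Finset.mem_coe.mpr hLJ)
          (hμz.trans hμL.symm))
  · have hμL : μ (LF n hn) = topOf (P (LF n hn)) (LF n hn) := hμ _ hiJ
    rcases top_cases n hn (P (LF n hn)) (hP _) (LF n hn) with h | h
    · rw [h] at hμL
      have hzJ : zF n hn ∈ J := by
        have := hbij.1 (Finset.mem_coe.mpr hiJ)
        rw [hμL] at this
        exact Finset.mem_coe.mp this
      have hμz : μ (zF n hn) = topOf (P (zF n hn)) (zF n hn) := hμ _ hzJ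
      rcases top_cases n hn (P (zF n hn)) (hP _) (zF n hn) with h' | h'
      · exfalso
        rw [h'] at hμz
        exact hzL (hbij.2.1 (Finset.mem_coe.mpr hzJ) (Finset.mem_coe.mpr hiJ)
          (hμz.trans hμL.symm))
      · unfold mech
        rw [if_pos ⟨h', h⟩, hμL]
        exact Equiv.swap_apply_right _ _
    · rw [h] at hμL
      unfold mech
      rw [if_neg (fun hc => hzL (h.symm.trans hc.2).symm)]
      rw [hμL]
      rfl

lemma mech_GSP (n : ℕ) (hn : 3 ≤ n) : GroupStrategyProof {p | SingleDipped p} (mech n hn) := by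
  intro P P' hP hP' J hJne hAgree hcon
  obtain ⟨h1, j, hjJ, hjlt⟩ := hcon
  have hzL := zF_ne_LF n hn
  haveI : Nonempty (Fin n) := ⟨zF n hn⟩
  by_cases hc : (topOf (P (zF n hn)) (zF n hn) = LF n hn ∧
      topOf (P (LF n hn)) (LF n hn) = zF n hn)
  · by_cases hc' : (topOf (P' (zF n hn)) (zF n hn) = LF n hn ∧
        topOf (P' (LF n hn)) (LF n hn) = zF n hn)
    · -- both swap: outcomes equal
      have eP : mech n hn P = ⇑(Equiv.swap (zF n hn) (LF n hn)) := by
        unfold mech; rw [if_pos hc]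
      have eP' : mech n hn P' = ⇑(Equiv.swap (zF n hn) (LF n hn)) := by
        unfold mech; rw [if_pos hc']
      rw [eP, eP'] at hjlt
      exact LO.irr _ hjlt
    · -- swap → id : the strict improver is directly contradicted
      have eP : mech n hn P = ⇑(Equiv.swap (zF n hn) (LF n hn)) := by
        unfold mech; rw [if_pos hc]
      have eP' : mech n hn P' = id := by
        unfold mech; rw [if_neg hc']
      rw [eP, eP'] at hjlt
      by_cases hjz : j = zF n hn
      · rw [hjz, Equiv.swap_apply_left] at hjlt
        have hle : (P (zF n hn)).le (zF n hn) (LF n hn) := by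
          have := le_topOf (P (zF n hn)) (zF n hn) (zF n hn)
          rw [hc.1] at this; exact this
        exact LO.nlt _ hjlt hle
      · by_cases hjL : j = LF n hn
        · rw [hjL, Equiv.swap_apply_right] at hjlt
          have hle : (P (LF n hn)).le (LF n hn) (zF n hn) := by
            have := le_topOf (P (LF n hn)) (LF n hn) (LF n hn)
            rw [hc.2] at this; exact this
          exact LO.nlt _ hjlt hle
        · rw [Equiv.swap_apply_of_ne_of_ne hjz hjL] at hjlt
          exact LO.irr _ hjlt
  · by_cases hc' : (topOf (P' (zF n hn)) (zF n hn) = LF n hn ∧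
        topOf (P' (LF n hn)) (LF n hn) = zF n hn)
    · -- id → swap
      have eP : mech n hn P = id := by
        unfold mech; rw [if_neg hc]
      have eP' : mech n hn P' = ⇑(Equiv.swap (zF n hn) (LF n hn)) := by
        unfold mech; rw [if_pos hc']
      rw [eP, eP'] at hjlt
      by_cases hjz : j = zF n hn
      · rw [hjz, Equiv.swap_apply_left] at hjlt
        -- hjlt : (P z).lt (id z) L, i.e. lt z L
        have hT0 : topOf (P (zF n hn)) (zF n hn) = LF n hn := by
          rcases top_cases n hn (P (zF n hn)) (hP _) (zF n hn) with h | h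
          · exfalso
            have hle : (P (zF n hn)).le (LF n hn) (zF n hn) := by
              have := le_topOf (P (zF n hn)) (zF n hn) (LF n hn)
              rw [h] at this; exact this
            exact LO.nlt _ hjlt hle
          · exact h
        have hTL : topOf (P (LF n hn)) (LF n hn) = LF n hn := by
          rcases top_cases n hn (P (LF n hn)) (hP _) (LF n hn) with h | h
          · exact absurd ⟨hT0, h⟩ hc
          · exact h
        have hPL : P' (LF n hn) ≠ P (LF n hn) := by
          intro he
          rw [he, hTL] at hc'
          exact hzL hc'.2.symm
        have hLJ : LF n hn ∈ J := by
          by_contra h'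
          exact hPL (hAgree _ h')
        have h1L := h1 (LF n hn) hLJ
        rw [eP, eP', Equiv.swap_apply_right] at h1L
        -- h1L : (P L).le (id L) z
        have hle : (P (LF n hn)).le (zF n hn) (LF n hn) := by
          have := le_topOf (P (LF n hn)) (LF n hn) (zF n hn)
          rw [hTL] at this; exact this
        exact hzL (LO.anti _ hle h1L)
      · by_cases hjL : j = LF n hn
        · rw [hjL, Equiv.swap_apply_right] at hjlt
          -- hjlt : (P L).lt (id L) z, i.e. lt L z
          have hTL : topOf (P (LF n hn)) (LF n hn) = zF n hn := by
            rcases top_cases n hn (P (LF n hn)) (hP _) (LF n hn) with h | h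
            · exact h
            · exfalso
              have hle : (P (LF n hn)).le (zF n hn) (LF n hn) := by
                have := le_topOf (P (LF n hn)) (LF n hn) (zF n hn)
                rw [h] at this; exact this
              exact LO.nlt _ hjlt hle
          have hT0 : topOf (P (zF n hn)) (zF n hn) = zF n hn := by
            rcases top_cases n hn (P (zF n hn)) (hP _) (zF n hn) with h | h
            · exact h
            · exact absurd ⟨h, hTL⟩ hc
          have hPz : P' (zF n hn) ≠ P (zF n hn) := by
            intro he
            rw [he, hT0] at hc'
            exact hzL hc'.1
          have hzJ : zF n hn ∈ J := by
            by_contra h'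
            exact hPz (hAgree _ h')
          have h1z := h1 (zF n hn) hzJ
          rw [eP, eP', Equiv.swap_apply_left] at h1z
          -- h1z : (P z).le (id z) L
          have hle : (P (zF n hn)).le (LF n hn) (zF n hn) := by
            have := le_topOf (P (zF n hn)) (zF n hn) (LF n hn)
            rw [hT0] at this; exact this
          exact hzL (LO.anti _ h1z hle)
        · rw [Equiv.swap_apply_of_ne_of_ne hjz hjL] at hjlt
          exact LO.irr _ hjlt
    · -- both id
      have eP : mech n hn P = id := by
        unfold mech; rw [if_neg hc]
      have eP' : mech n hn P' = id := by
        unfold mech; rw [if_neg hc']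
      rw [eP, eP'] at hjlt
      exact LO.irr _ hjlt

/-- The profile witnessing the difference with TTC: agent `1` has preference
`pB` (top object `0`), everyone else has preference `pA` (the natural order,
top object `n-1`). -/
def Pd (n : ℕ) (hn : 3 ≤ n) : Fin n → LinearOrder (Fin n) :=
  fun i => if i = oF n hn then pB n else pA n

def favD (n : ℕ) (hn : 3 ≤ n) : Fin n → Finset (Fin n) → Fin n :=
  fun i S => favIn (Pd n hn i) S i

def Sk (n k : ℕ) : Finset (Fin n) := Finset.univ.filter (fun i => i.val ≤ k)

lemma mem_Sk {n k : ℕ} {i : Fin n} : i ∈ Sk n k ↔ i.val ≤ k := by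
  simp [Sk]

lemma favD_ne (n : ℕ) (hn : 3 ≤ n) {i : Fin n} (hi : i ≠ oF n hn) {k : ℕ} (hk : k < n) :
    favD n hn i (Sk n k) = ⟨k, hk⟩ := by
  unfold favD Pd
  rw [if_neg hi]
  apply favIn_eq_of
  · rw [mem_Sk]
  · intro x hx
    rw [mem_Sk] at hx
    rw [pA_le, Fin.le_def]
    exact hx

lemma favD_one (n : ℕ) (hn : 3 ≤ n) {k : ℕ} : favD n hn (oF n hn) (Sk n k) = zF n hn := by
  unfold favD Pd
  rw [if_pos rfl]
  apply favIn_eq_of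
  · rw [mem_Sk, zF_val]; omega
  · intro x hx
    have := x.isLt
    rw [pB_le, fB_eval, fB_eval, zF_val, if_pos rfl]
    split <;> omega

lemma cyc_k (n : ℕ) (hn : 3 ≤ n) (k : ℕ) (hk2 : 2 ≤ k) (hk : k ≤ n - 1) :
    cyclicAgents (favD n hn) (Sk n k) = {(⟨k, by omega⟩ : Fin n)} := by
  have hkn : k < n := by omega
  have hfv : ∀ j : Fin n, j ≠ oF n hn → favD n hn j (Sk n k) = ⟨k, hkn⟩ :=
    fun j hj => favD_ne n hn hj hkn
  have hfo : favD n hn (oF n hn) (Sk n k) = zF n hn := favD_one n hn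
  have hKo : (⟨k, hkn⟩ : Fin n) ≠ oF n hn := by
    intro h
    have h2 : k = 1 := congrArg Fin.val h
    omega
  have hstep : ∀ j : Fin n, favD n hn (favD n hn j (Sk n k)) (Sk n k) = ⟨k, hkn⟩ := by
    intro j
    by_cases hj : j = oF n hn
    · rw [hj, hfo]; exact hfv _ (zF_ne_oF n hn)
    · rw [hfv j hj]; exact hfv _ hKo
  have hiter : ∀ (m : ℕ) (j : Fin n),
      (fun j => favD n hn j (Sk n k))^[m + 2] j = ⟨k, hkn⟩ := by
    intro m
    induction m with
    | zero => intro j; exact hstep j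
    | succ m ih =>
      intro j
      rw [Function.iterate_succ_apply]
      exact ih _
  ext i
  simp only [cyclicAgents, Finset.mem_filter, Finset.mem_singleton, Finset.mem_range]
  constructor
  · rintro ⟨hiS, m, hm, hit⟩
    rcases m with _ | m
    · have hit' : favD n hn i (Sk n k) = i := hit
      by_cases hio : i = oF n hn
      · exfalso
        rw [hio, hfo] at hit'
        exact zF_ne_oF n hn hit'
      · rw [hfv i hio] at hit'
        exact hit'.symm
    · exact (hit.symm.trans (hiter m i))
  · rintro rfl
    refine ⟨?_, 0, ?_, ?_⟩
    · rw [mem_Sk]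
    · exact Finset.card_pos.mpr ⟨⟨k, hkn⟩, by rw [mem_Sk]⟩
    · exact hfv _ hKo

lemma Sk_sdiff (n : ℕ) (k : ℕ) (hk1 : 1 ≤ k) (hk : k < n) :
    Sk n k \ {(⟨k, hk⟩ : Fin n)} = Sk n (k - 1) := by
  ext i
  simp only [Finset.mem_sdiff, mem_Sk, Finset.mem_singleton, Fin.ext_iff]
  have hkv : (⟨k, hk⟩ : Fin n).val = k := rfl
  constructor
  · rintro ⟨h1, h2⟩
    omega
  · intro h1
    refine ⟨by omega, by omega⟩

lemma cyc_one_mem (n : ℕ) (hn : 3 ≤ n) :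
    zF n hn ∈ cyclicAgents (favD n hn) (Sk n 1) := by
  have h1n : 1 < n := by omega
  have hz : zF n hn ∈ Sk n 1 := by rw [mem_Sk, zF_val]; omega
  have ho : oF n hn ∈ Sk n 1 := by rw [mem_Sk, oF_val]
  have hcard : 1 < (Sk n 1).card := Finset.one_lt_card.mpr ⟨_, hz, _, ho, zF_ne_oF n hn⟩
  have hfz : favD n hn (zF n hn) (Sk n 1) = oF n hn :=
    (favD_ne n hn (zF_ne_oF n hn) h1n).trans (Fin.ext rfl)
  have hfo : favD n hn (oF n hn) (Sk n 1) = zF n hn := favD_one n hn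
  simp only [cyclicAgents, Finset.mem_filter, Finset.mem_range]
  refine ⟨hz, 1, hcard, ?_⟩
  show favD n hn (favD n hn (zF n hn) (Sk n 1)) (Sk n 1) = zF n hn
  rw [hfz, hfo]

lemma ttc_stage (n : ℕ) (hn : 3 ≤ n) :
    ∀ k : ℕ, 1 ≤ k → k ≤ n - 1 → TTCaux (favD n hn) (Sk n k) (zF n hn) = oF n hn := by
  intro k
  induction k with
  | zero => intro h; omega
  | succ k ih =>
    intro hk1 hkn
    by_cases hk0 : k = 0
    · subst hk0
      have hmem := cyc_one_mem n hn
      have hC : (cyclicAgents (favD n hn) (Sk n 1)).Nonempty := ⟨_, hmem⟩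
      rw [TTCaux]
      simp only [dif_pos hC, if_pos hmem]
      exact (favD_ne n hn (zF_ne_oF n hn) (by omega)).trans (Fin.ext rfl)
    · have hk2 : 2 ≤ k + 1 := by omega
      have hkn' : k + 1 < n := by omega
      have hcyc := cyc_k n hn (k+1) hk2 hkn
      have hC : (cyclicAgents (favD n hn) (Sk n (k+1))).Nonempty := by
        rw [hcyc]; exact ⟨_, Finset.mem_singleton_self _⟩
      have hznot : zF n hn ∉ cyclicAgents (favD n hn) (Sk n (k+1)) := by
        rw [hcyc, Finset.mem_singleton]
        intro h
        have h2 : (0:ℕ) = k+1 := congrArg Fin.val h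
        omega
      rw [TTCaux]
      simp only [dif_pos hC, if_neg hznot]
      rw [hcyc]
      have hsd : Sk n (k+1) \ {(⟨k+1, by omega⟩ : Fin n)} = Sk n k := by
        have := Sk_sdiff n (k+1) (by omega) hkn'
        simpa using this
      rw [hsd]
      exact ih (by omega) (by omega)

lemma Sk_univ (n : ℕ) (hn : 3 ≤ n) : Sk n (n-1) = Finset.univ := by
  refine (Finset.eq_univ_iff_forall.mpr ?_).symm.symm
  intro i
  rw [mem_Sk]
  have := i.isLt
  omega

end Stmt14Aux

/-- For every `n ≥ 3`, on the single-dipped preference domain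
(with respect to `o_1 ▷ o_2 ▷ ⋯ ▷ o_n`) there exists a mechanism that is
locally unanimous and group strategy-proof but differs from the TTC mechanism. -/
theorem stmt_14 (n : ℕ) (hn : 3 ≤ n) :
    ∃ ψ : (Fin n → LinearOrder (Fin n)) → Fin n → Fin n,
      (∀ P : Fin n → LinearOrder (Fin n), (∀ i, SingleDipped (P i)) →
        Function.Bijective (ψ P)) ∧
      LocallyUnanimous {p | SingleDipped p} ψ ∧
      GroupStrategyProof {p | SingleDipped p} ψ ∧
      ∃ P : Fin n → LinearOrder (Fin n), (∀ i, SingleDipped (P i)) ∧ ψ P ≠ TTC P := by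
  refine ⟨mech n hn, ?_, mech_LU n hn, mech_GSP n hn, Pd n hn, ?_, ?_⟩
  · intro P _
    unfold mech
    split
    · exact (Equiv.swap _ _).bijective
    · exact Function.bijective_id
  · intro i
    unfold Pd
    split
    · exact sd_pB n hn
    · exact sd_pA n hn
  · intro h
    have hTTC : TTC (Pd n hn) (zF n hn) = oF n hn := by
      show TTCaux (fun i S => favIn (Pd n hn i) S i) Finset.univ (zF n hn) = oF n hn
      rw [← Sk_univ n hn]
      exact ttc_stage n hn (n-1) (by omega) le_rfl
    have hcnd : ¬(topOf (Pd n hn (zF n hn)) (zF n hn) = LF n hn ∧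
        topOf (Pd n hn (LF n hn)) (LF n hn) = zF n hn) := by
      rintro ⟨h1, h2⟩
      have hL : Pd n hn (LF n hn) = pA n := by
        unfold Pd
        rw [if_neg]
        intro he
        have := congrArg Fin.val he
        rw [LF_val, oF_val] at this
        omega
      rw [hL, top_pA n hn] at h2
      exact zF_ne_LF n hn h2.symm
    have hmech : mech n hn (Pd n hn) (zF n hn) = zF n hn := by
      unfold mech
      rw [if_neg hcnd]
      rfl
    have := congrFun h (zF n hn)
    rw [hmech, hTTC] at this
    exact zF_ne_oF n hn this
end
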